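/- arXiv:1810.00548 — 5 statements merged into one kernel-verified Lean document; each statement's English description precedes it below -/
import Mathlib

section
/- Let ⋆ be the unique binary operation on {1,...,N} satisfying p ⋆ 1 = p + 1 mod N and p ⋆ (q ⋆ 1) = (p ⋆ q) ⋆ (p ⋆ 1). Then N ⋆ q = q for all q in {1,...,N}. -/
/-- The defining axioms of the Laver-type operation on {1,...,N}: it maps the set into
itself, satisfies p ⋆ 1 = p+1 mod N (i.e. p % N + 1), and
p ⋆ (q ⋆ 1) = (p ⋆ q) ⋆ (p ⋆ 1). -/
def LaverAxioms (N : ℕ) (star : ℕ → ℕ → ℕ) : Prop :=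
  (∀ p q, p ∈ Set.Icc 1 N → q ∈ Set.Icc 1 N → star p q ∈ Set.Icc 1 N) ∧
  (∀ p ∈ Set.Icc 1 N, star p 1 = p % N + 1) ∧
  (∀ p q, p ∈ Set.Icc 1 N → q ∈ Set.Icc 1 N →
    star p (star q 1) = star (star p q) (star p 1))

/-! Since `N ⋆ 1 = 1`, the law `p ⋆ (q ⋆ 1) = (p ⋆ q) ⋆ (p ⋆ 1)` at `p = N` reads
`N ⋆ (q + 1) = (N ⋆ q) ⋆ 1`, so `q ↦ N ⋆ q` commutes with the successor map and fixes `1`;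
induction on `q` shows it is the identity. -/

namespace LaverAxioms

variable {N : ℕ} {star : ℕ → ℕ → ℕ}

theorem star_one_of_lt (h : LaverAxioms N star) {p : ℕ} (hp : 1 ≤ p) (hpN : p < N) :
    star p 1 = p + 1 := by
  rw [h.2.1 p ⟨hp, hpN.le⟩, Nat.mod_eq_of_lt hpN]

theorem star_top_one (h : LaverAxioms N star) (hN : 0 < N) : star N 1 = 1 := by
  rw [h.2.1 N ⟨hN, le_rfl⟩, Nat.mod_self]

theorem star_top (h : LaverAxioms N star) {q : ℕ} (hq : 1 ≤ q) (hqN : q ≤ N) :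
    star N q = q := by
  have hN : 0 < N := hq.trans hqN
  induction q, hq using Nat.le_induction with
  | base => exact h.star_top_one hN
  | succ n hn ih =>
    have hnN : n < N := hqN
    calc star N (n + 1) = star N (star n 1) := by rw [h.star_one_of_lt hn hnN]
      _ = star (star N n) (star N 1) := h.2.2 N n ⟨hN, le_rfl⟩ ⟨hn, hnN.le⟩
      _ = star n 1 := by rw [ih hnN.le, h.star_top_one hN]
      _ = n + 1 := h.star_one_of_lt hn hnN

end LaverAxioms

theorem laver_top_row_general (N : ℕ) (star : ℕ → ℕ → ℕ)
    (h : LaverAxioms N star) :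
    ∀ q ∈ Set.Icc 1 N, star N q = q :=
  fun _ hq => h.star_top hq.1 hq.2

/-- N ⋆ q = q for all q in {1,...,N}. -/
theorem laver_top_row (N : ℕ) (hN : 0 < N) (star : ℕ → ℕ → ℕ)
    (h : LaverAxioms N star) :
    ∀ q ∈ Set.Icc 1 N, star N q = q :=
  laver_top_row_general N star h
end

section
/- Let ⋆ be the unique binary operation on {1,...,N} satisfying p ⋆ 1 = p + 1 mod N and p ⋆ (q ⋆ 1) = (p ⋆ q) ⋆ (p ⋆ 1). Then for all p < N and all q, one has p < p ⋆ q ≤ N. -/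
/-!
Right multiplication by `1` is the successor on `1, …, N - 1`, so the left distributive law
unfolds into the recursion `p ⋆ (q + 1) = (p ⋆ q) ⋆ (p + 1)`. By induction on `q` this gives
`N ⋆ q = q`, and, by downward induction on `p` nested with induction on `q`, `p < p ⋆ q`: in the
step, `r = p ⋆ q` exceeds `p`, and either `r = N`, where `r ⋆ (p + 1) = p + 1`, or `r < N`,
where the claim for `r` applies.
-/

namespace LaverAxioms

variable {N : ℕ} {star : ℕ → ℕ → ℕ}

theorem star_mem_Icc (h : LaverAxioms N star) {p q : ℕ} (hp : p ∈ Set.Icc 1 N)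
    (hq : q ∈ Set.Icc 1 N) : star p q ∈ Set.Icc 1 N :=
  h.1 p q hp hq

theorem star_succ (h : LaverAxioms N star) {p q : ℕ} (hp : p ∈ Set.Icc 1 N) (hq : 1 ≤ q)
    (hqN : q < N) : star p (q + 1) = star (star p q) (star p 1) := by
  rw [← h.star_one_of_lt hq hqN]
  exact h.2.2 p q hp ⟨hq, hqN.le⟩

theorem star_self_one (h : LaverAxioms N star) (hN : 1 ≤ N) : star N 1 = 1 := by
  rw [h.2.1 N ⟨hN, le_rfl⟩, Nat.mod_self]

theorem star_self_left (h : LaverAxioms N star) {q : ℕ} (hq : q ∈ Set.Icc 1 N) :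
    star N q = q := by
  obtain ⟨hq1, hqN⟩ := hq
  have hN : 1 ≤ N := hq1.trans hqN
  induction q, hq1 using Nat.le_induction with
  | base => exact h.star_self_one hN
  | succ q hq1 ih =>
    rw [h.star_succ ⟨hN, le_rfl⟩ hq1 (by omega), ih (by omega), h.star_self_one hN,
      h.star_one_of_lt hq1 (by omega)]

theorem lt_star (h : LaverAxioms N star) {p : ℕ} (hp : 1 ≤ p) (hpN : p < N) {q : ℕ}
    (hq : q ∈ Set.Icc 1 N) : p < star p q := by
  obtain ⟨hq1, hqN⟩ := hq
  induction q, hq1 using Nat.le_induction with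
  | base => rw [h.star_one_of_lt hp hpN]; omega
  | succ q hq1 ih =>
    have hpr : p < star p q := ih (by omega)
    have hrN : star p q ≤ N := (h.star_mem_Icc ⟨hp, hpN.le⟩ ⟨hq1, by omega⟩).2
    rw [h.star_succ ⟨hp, hpN.le⟩ hq1 (by omega), h.star_one_of_lt hp hpN]
    rcases hrN.eq_or_lt with hrN | hrN
    · rw [hrN, h.star_self_left ⟨by omega, hpN⟩]
      omega
    · exact hpr.trans (h.lt_star (by omega) hrN ⟨by omega, hpN⟩)
termination_by N - p

end LaverAxioms

theorem laver_strict_bounds_general (N : ℕ) (star : ℕ → ℕ → ℕ)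
    (h : LaverAxioms N star) :
    ∀ p q, 1 ≤ p → p < N → q ∈ Set.Icc 1 N → p < star p q ∧ star p q ≤ N :=
  fun _ _ hp hpN hq => ⟨h.lt_star hp hpN hq, (h.star_mem_Icc ⟨hp, hpN.le⟩ hq).2⟩

/-- for all p < N (with p in {1,...,N}) and all q in {1,...,N},
one has p < p ⋆ q ≤ N. -/
theorem laver_strict_bounds (N : ℕ) (hN : 0 < N) (star : ℕ → ℕ → ℕ)
    (h : LaverAxioms N star) :
    ∀ p q, 1 ≤ p → p < N → q ∈ Set.Icc 1 N → p < star p q ∧ star p q ≤ N :=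
  laver_strict_bounds_general N star h
end

section
/- Let * be the backwards Laver operation on nonnegative integers, defined by p * q = 2^n - ((2^n - p) ⋆ₙ (2^n - q)) for any n with p, q < 2^n (this is independent of n). Then 0 * p = p and p * 0 = 0 for all p ≥ 0, and * is left distributive: p * (q * r) = (p * q) * (p * r). -/
/-- `bstar` is the backwards Laver operation:
p * q = 2^n - ((2^n - p) ⋆ₙ (2^n - q)) for any n with p, q < 2^n. -/
def IsBackLaver (bstar : ℕ → ℕ → ℕ) : Prop :=
  ∀ n (star : ℕ → ℕ → ℕ), LaverAxioms (2 ^ n) star →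
    ∀ p q, p < 2 ^ n → q < 2 ^ n →
      bstar p q = 2 ^ n - star (2 ^ n - p) (2 ^ n - q)


namespace BackLaver

def rowA (T : ℕ → ℕ → ℕ) (p : ℕ) : ℕ → ℕ
  | 0 => p + 1
  | j+1 => T (rowA T p j) (p+1)

def tabAux (N : ℕ) : ℕ → ℕ → ℕ → ℕ
  | 0 => fun _ q => q
  | k+1 => fun p q => if N - k ≤ p then tabAux N k p q else rowA (tabAux N k) p (q-1)

def tab (N p q : ℕ) : ℕ := tabAux N (N - p) p q

lemma tabAux_stable (N : ℕ) : ∀ k p q, N - p ≤ k → tabAux N k p q = tab N p q := by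
  intro k
  induction k with
  | zero =>
    intro p q h
    have h0 : N - p = 0 := by omega
    rw [tab, h0]
  | succ k ih =>
    intro p q h
    rcases Nat.lt_or_ge (N - p) (k+1) with h' | h'
    · have hk : N - p ≤ k := by omega
      have hcond : N - k ≤ p := by omega
      simp only [tabAux, if_pos hcond]
      exact ih p q hk
    · have : N - p = k + 1 := by omega
      rw [tab, this]

lemma tab_ge {N p : ℕ} (h : N ≤ p) (q : ℕ) : tab N p q = q := by
  have h0 : N - p = 0 := by omega
  rw [tab, h0]
  rfl

lemma tab_lt {N p : ℕ} (h : p < N) (q : ℕ) :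
    tab N p q = rowA (tabAux N (N - p - 1)) p (q - 1) := by
  obtain ⟨k, hk⟩ : ∃ k, N - p = k + 1 := ⟨N - p - 1, by omega⟩
  rw [show N - p - 1 = k from by omega, tab, hk]
  simp only [tabAux]
  rw [if_neg (by omega)]

lemma tab_one {N p : ℕ} (h : p < N) : tab N p 1 = p + 1 := by
  rw [tab_lt h]
  rfl

lemma closure_aux (N : ℕ) : ∀ m p, p < N → N - p ≤ m → ∀ q,
    p < tab N p (q+1) ∧ tab N p (q+1) ≤ N := by
  intro m
  induction m with
  | zero => intro p hp hm; omega
  | succ m ih =>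
    intro p hp hm q
    rw [tab_lt hp]
    simp only [Nat.add_sub_cancel]
    induction q with
    | zero => simpa [rowA] using hp
    | succ j ihj =>
      obtain ⟨h1, h2⟩ := ihj
      simp only [rowA]
      set v := rowA (tabAux N (N - p - 1)) p j with hv
      rw [tabAux_stable N _ v (p+1) (by omega)]
      rcases eq_or_lt_of_le h2 with hveq | hvlt
      · rw [hveq, tab_ge (le_refl N)]
        omega
      · have := ih v hvlt (by omega) p
        omega

lemma tab_closure {N p q : ℕ} (hp : p < N) (hq : 1 ≤ q) :
    p < tab N p q ∧ tab N p q ≤ N := by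
  obtain ⟨j, rfl⟩ : ∃ j, q = j + 1 := ⟨q - 1, by omega⟩
  exact closure_aux N (N - p) p hp (le_refl _) j

lemma tab_succ {N p q : ℕ} (hp : p < N) (hq : 1 ≤ q) :
    tab N p (q+1) = tab N (tab N p q) (p+1) := by
  obtain ⟨j, rfl⟩ : ∃ j, q = j + 1 := ⟨q - 1, by omega⟩
  have hcl := (tab_closure hp (show 1 ≤ j+1 by omega)).1
  rw [tab_lt hp (j+1)] at hcl ⊢
  rw [tab_lt hp (j+1+1)]
  simp only [Nat.add_sub_cancel, rowA] at hcl ⊢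
  exact tabAux_stable N _ _ _ (by omega)


lemma tab_mono {N p q : ℕ} (hp : p < N) (hq : 1 ≤ q) (h : tab N p q < N) :
    tab N p q < tab N p (q+1) := by
  rw [tab_succ hp hq]
  exact (tab_closure h (by omega)).1

/-- the row of `p` reaches `N`. -/
lemma tab_reach {N p : ℕ} (hp : p < N) : ∃ q, 1 ≤ q ∧ q ≤ N - p ∧ tab N p q = N := by
  have key : ∀ j, p + (j+1) ≤ tab N p (j+1) ∨ ∃ q, 1 ≤ q ∧ q ≤ j+1 ∧ tab N p q = N := by
    intro j
    induction j with
    | zero =>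
      left; rw [tab_one hp]
    | succ j ih =>
      rcases ih with h | ⟨q, h1, h2, h3⟩
      · rcases eq_or_lt_of_le (tab_closure hp (show (1:ℕ) ≤ j+1 by omega)).2 with he | hl
        · right; exact ⟨j+1, by omega, by omega, he⟩
        · left
          have := tab_mono hp (show (1:ℕ) ≤ j+1 by omega) hl
          omega
      · right; exact ⟨q, h1, by omega, h3⟩
  obtain ⟨j, hj⟩ : ∃ j, N - p = j + 1 := ⟨N - p - 1, by omega⟩
  rcases key j with h | ⟨q, h1, h2, h3⟩
  · exact ⟨j+1, by omega, by omega, by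
      have := (tab_closure hp (show (1:ℕ) ≤ j+1 by omega)).2
      omega⟩
  · exact ⟨q, h1, by omega, h3⟩

/-- the period of a row: least `d ≥ 1` with `p ⋆ d = N`, and the hit-iff-divisible law. -/
lemma period_exists {N p : ℕ} (hp : p < N) :
    ∃ d, 1 ≤ d ∧ d ≤ N - p ∧ ∀ q, 1 ≤ q → (tab N p q = N ↔ d ∣ q) := by
  obtain ⟨q0, hq0⟩ := tab_reach hp
  have hex : ∃ q, 1 ≤ q ∧ tab N p q = N := ⟨q0, hq0.1, hq0.2.2⟩
  classical
  set d := Nat.find hex with hd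
  have hdP : 1 ≤ d ∧ tab N p d = N := Nat.find_spec hex
  have hdmin : ∀ q, q < d → ¬(1 ≤ q ∧ tab N p q = N) := fun q hq => Nat.find_min hex hq
  have hdle : d ≤ q0 := Nat.find_min' hex ⟨hq0.1, hq0.2.2⟩
  have shift : ∀ j, 1 ≤ j → tab N p (d + j) = tab N p j := by
    intro j hj
    induction j with
    | zero => omega
    | succ j ih =>
      rcases Nat.eq_or_lt_of_le hj with h1 | h1
      · rw [← h1, tab_succ hp hdP.1, hdP.2, tab_ge (le_refl N), tab_one hp]
      · have hj1 : 1 ≤ j := by omega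
        rw [show d + (j+1) = (d+j) + 1 from by omega, tab_succ hp (by omega),
          ih hj1, ← tab_succ hp hj1]
  refine ⟨d, hdP.1, by omega, ?_⟩
  intro q
  induction q using Nat.strong_induction_on with
  | _ q ihq =>
    intro hq1
    rcases lt_trichotomy q d with h | h | h
    · constructor
      · intro he; exact absurd ⟨hq1, he⟩ (hdmin q h)
      · intro hdvd
        have := Nat.le_of_dvd (by omega) hdvd
        omega
    · subst h
      simp [hdP.2]
    · have h1 : 1 ≤ q - d := by omega
      have h2 : tab N p q = tab N p (q - d) := by
        rw [← shift (q - d) h1, show d + (q - d) = q from by omega]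
      rw [h2, ihq (q - d) (by omega) h1]
      constructor
      · intro hdvd
        have : d ∣ (q - d) + d := Nat.dvd_add hdvd (dvd_refl d)
        rwa [show q - d + d = q from by omega] at this
      · intro hdvd
        exact (Nat.dvd_sub hdvd (dvd_refl d))

/-- projection to the half-size table -/
def pro (N x : ℕ) : ℕ := (x - 1) % N + 1

lemma pro_one_le (N x : ℕ) : 1 ≤ pro N x := by simp [pro]

lemma pro_le {N : ℕ} (hN : 1 ≤ N) (x : ℕ) : pro N x ≤ N := by
  have := Nat.mod_lt (x-1) (show 0 < N from hN)
  simp only [pro]; omega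

lemma pro_eq_self {N x : ℕ} (h1 : 1 ≤ x) (h2 : x ≤ N) : pro N x = x := by
  simp only [pro]
  rw [Nat.mod_eq_of_lt (by omega)]
  omega

lemma pro_spec {N x : ℕ} (h1 : 1 ≤ x) : ∃ k, x = N * k + pro N x := by
  refine ⟨(x-1)/N, ?_⟩
  have := Nat.div_add_mod (x-1) N
  simp only [pro]
  omega

lemma pro_succ {N x : ℕ} (hN : 1 ≤ N) (h1 : 1 ≤ x) :
    pro N (x+1) = pro N x % N + 1 := by
  simp only [pro, Nat.add_sub_cancel]
  rw [Nat.mod_add_mod, show x - 1 + 1 = x from by omega]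

lemma dvd_pro_iff {N e x : ℕ} (he : e ∣ N) (h1 : 1 ≤ x) :
    (e ∣ pro N x ↔ e ∣ x) := by
  obtain ⟨k, hk⟩ := pro_spec (N := N) h1
  constructor
  · intro h
    rw [hk]; exact Nat.dvd_add (Dvd.dvd.mul_right he k) h
  · intro h
    have : e ∣ N * k := Dvd.dvd.mul_right he k
    have hx : pro N x = x - N * k := by omega
    rw [hx]
    exact Nat.dvd_sub h this

lemma pro_eq_N {N x : ℕ} (hN : 1 ≤ N) (h1 : 1 ≤ x) (h2 : x ≤ 2*N) (h : pro N x = N) :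
    x = N ∨ x = 2*N := by
  obtain ⟨k, hk⟩ := pro_spec (N := N) h1
  rw [h] at hk
  rcases k with _ | _ | k
  · left; omega
  · right; omega
  · exfalso
    have : N * 2 ≤ N * (k+1+1) := Nat.mul_le_mul_left N (by omega)
    omega

lemma pro_2N {N : ℕ} (hN : 1 ≤ N) : pro N (2*N) = N := by
  simp only [pro]
  rw [show 2*N - 1 = N + (N-1) from by omega, Nat.add_mod_left,
    Nat.mod_eq_of_lt (by omega)]
  omega

lemma upper_half {N z : ℕ} (h1 : N < z) (h2 : z ≤ 2*N) : z = N + pro N z := by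
  simp only [pro]
  rw [show z - 1 = N + (z - 1 - N) from by omega, Nat.add_mod_left,
    Nat.mod_eq_of_lt (by omega)]
  omega


/-- periodicity: every row of the table of size `N` satisfies `p ⋆ N = N`. -/
def Per (N : ℕ) : Prop := ∀ p, 1 ≤ p → p ≤ N → tab N p N = N

lemma tab_first {N p : ℕ} (h1 : 1 ≤ p) (h2 : p ≤ N) : tab N p 1 = p % N + 1 := by
  rcases eq_or_lt_of_le h2 with he | hl
  · rw [he, tab_ge (le_refl N), Nat.mod_self]
  · rw [tab_one hl, Nat.mod_eq_of_lt hl]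

/-- special self-distributivity (the third Laver axiom). -/
lemma tab_sd {N a b : ℕ} (hN : 1 ≤ N) (hper : Per N) (ha1 : 1 ≤ a) (ha2 : a ≤ N)
    (hb1 : 1 ≤ b) (hb2 : b ≤ N) :
    tab N a (tab N b 1) = tab N (tab N a b) (tab N a 1) := by
  rcases eq_or_lt_of_le hb2 with hbe | hbl
  · rw [hbe, tab_ge (le_refl N) 1, hper a ha1 ha2, tab_ge (le_refl N)]
  · rcases eq_or_lt_of_le ha2 with hae | hal
    · rw [hae]
      simp only [tab_ge (le_refl N)]
    · rw [tab_one hbl, tab_one hal, tab_succ hal hb1]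

/-- `pro N` is a homomorphism from the table of size `2N` to the table of size `N`. -/
lemma tab_hom {N : ℕ} (hN : 1 ≤ N) (hper : Per N) :
    ∀ m p, 1 ≤ p → p ≤ 2*N → 2*N - p ≤ m → ∀ q, 1 ≤ q → q ≤ 2*N →
      pro N (tab (2*N) p q) = tab N (pro N p) (pro N q) := by
  intro m
  induction m with
  | zero =>
    intro p hp1 hp2 hm q hq1 hq2
    have hp : p = 2*N := by omega
    subst hp
    rw [tab_ge (le_refl _), pro_2N hN, tab_ge (le_refl N)]
  | succ m ih =>
    intro p hp1 hp2 hm q hq1 hq2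
    rcases eq_or_lt_of_le hp2 with hpe | hpl
    · subst hpe
      rw [tab_ge (le_refl _), pro_2N hN, tab_ge (le_refl N)]
    · -- p < 2N
      induction q with
      | zero => omega
      | succ k ihk =>
        rcases Nat.eq_or_lt_of_le hq1 with hk0 | hk1
        · -- q = 1
          rw [← hk0, tab_one hpl, pro_eq_self (le_refl 1) hN,
            tab_first (pro_one_le N p) (pro_le hN p), pro_succ hN hp1]
        · -- q = k+1, k ≥ 1
          have hk1' : 1 ≤ k := by omega
          have hcl := tab_closure hpl hk1'
          set v := tab (2*N) p k with hv
          have hstep : tab (2*N) p (k+1) = tab (2*N) v (p+1) := tab_succ hpl hk1'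
          have hvhom : pro N (tab (2*N) v (p+1)) = tab N (pro N v) (pro N (p+1)) :=
            ih v (by omega) (by omega) (by omega) (p+1) (by omega) (by omega)
          rw [hstep, hvhom, ihk (by omega) (by omega)]
          rw [pro_succ hN hp1, pro_succ hN (show 1 ≤ k from hk1'),
            ← tab_first (pro_one_le N p) (pro_le hN p),
            ← tab_first (pro_one_le N k) (pro_le hN k)]
          exact (tab_sd hN hper (pro_one_le N p) (pro_le hN p)
            (pro_one_le N k) (pro_le hN k)).symm

/-- row `N` in the table of size `2N`. -/
lemma tab_rowN {N x : ℕ} (hN : 1 ≤ N) (hper : Per N) (h1 : 1 ≤ x) (h2 : x ≤ 2*N) :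
    tab (2*N) N x = N + pro N x := by
  have hNM : N < 2*N := by omega
  have hcl := tab_closure hNM h1
  have hh := tab_hom hN hper (2*N) N (by omega) (by omega) (by omega) x h1 h2
  rw [pro_eq_self (by omega) (le_refl N), tab_ge (le_refl N)] at hh
  have := upper_half hcl.1 hcl.2
  omega

lemma per_double {N : ℕ} (hN : 1 ≤ N) (hper : Per N) : Per (2*N) := by
  intro p hp1 hp2
  rcases eq_or_lt_of_le hp2 with hpe | hpl
  · subst hpe; exact tab_ge (le_refl _) _
  -- p < 2N
  rcases eq_or_lt_of_le (pro_le hN p) with hπN | hπl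
  · -- pro N p = N, so p = N
    have hpN : p = N := by
      rcases pro_eq_N hN hp1 hp2 hπN with h | h
      · exact h
      · omega
    rw [hpN, tab_rowN hN hper (by omega) (le_refl _), pro_2N hN]
    omega
  · -- pro N p < N
    obtain ⟨e, he1, he2, hiff⟩ := period_exists hπl
    have heN : e ∣ N := (hiff N hN).mp (hper (pro N p) (pro_one_le N p) (pro_le hN p))
    obtain ⟨d, hd1, hd2, hdiff⟩ := period_exists hpl
    have heM : e ≤ N := by omega
    -- any hit of 2N in row p happens at a multiple of e
    have hMtoe : ∀ y, 1 ≤ y → y ≤ 2*N → tab (2*N) p y = 2*N → e ∣ y := by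
      intro y hy1 hy2 hy
      have hh := tab_hom hN hper (2*N - p) p hp1 hp2 (le_refl _) y hy1 hy2
      rw [hy, pro_2N hN] at hh
      exact (dvd_pro_iff heN hy1).mp ((hiff (pro N y) (pro_one_le N y)).mp hh.symm)
    have hed : e ∣ d := hMtoe d hd1 (by omega) ((hdiff d hd1).mpr (dvd_refl d))
    -- value at e
    have hhe := tab_hom hN hper (2*N - p) p hp1 hp2 (le_refl _) e he1 (by omega)
    rw [pro_eq_self he1 heM] at hhe
    have hheN : pro N (tab (2*N) p e) = N := by
      rw [hhe]; exact (hiff e he1).mpr (dvd_refl e)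
    have hecl := tab_closure hpl he1
    rcases pro_eq_N hN (by omega) hecl.2 hheN with hcase | hcase
    · -- tab (2N) p e = N : period doubles
      have hpN' : p < N := by omega
      -- no hit strictly between e and 2e
      have nohit : ∀ y, e < y → y < 2*e → tab (2*N) p y ≠ 2*N := by
        intro y hy1 hy2 hy
        have := hMtoe y (by omega) (by omega) hy
        obtain ⟨c, rfl⟩ := this
        rcases c with _ | _ | c
        · omega
        · omega
        · have : e * 2 ≤ e * (c+1+1) := Nat.mul_le_mul_left e (by omega)
          omega
      -- increasing run from e+1 to 2e
      have run : ∀ j, 1 ≤ j → j ≤ e → N + j ≤ tab (2*N) p (e + j) := by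
        intro j
        induction j with
        | zero => omega
        | succ j ihj =>
          intro hj1 hj2
          rcases Nat.eq_or_lt_of_le hj1 with h0 | h0
          · rw [← h0, tab_succ hpl he1, hcase, tab_rowN hN hper (by omega) (by omega)]
            have := pro_one_le N (p+1)
            omega
          · have hj1' : 1 ≤ j := by omega
            have hrun := ihj hj1' (by omega)
            have hcl2 := tab_closure hpl (show 1 ≤ e + j by omega)
            have hne : tab (2*N) p (e+j) ≠ 2*N := nohit (e+j) (by omega) (by omega)
            have hlt : tab (2*N) p (e+j) < 2*N := by omega
            have := tab_mono hpl (show 1 ≤ e + j by omega) hlt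
            rw [show e + (j+1) = (e+j) + 1 from by omega]
            omega
      have h2e := run e he1 (le_refl e)
      rw [show e + e = 2*e from by omega] at h2e
      -- tab (2N) p (2e) projects to N and exceeds N, hence equals 2N
      have hh2 := tab_hom hN hper (2*N - p) p hp1 hp2 (le_refl _) (2*e) (by omega) (by omega)
      have hdvd2e : e ∣ pro N (2*e) := (dvd_pro_iff heN (by omega)).mpr ⟨2, by ring⟩
      have hproN : pro N (tab (2*N) p (2*e)) = N := by
        rw [hh2]; exact (hiff (pro N (2*e)) (pro_one_le _ _)).mpr hdvd2e
      have hcl2e := tab_closure hpl (show 1 ≤ 2*e by omega)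
      have h2eM : tab (2*N) p (2*e) = 2*N := by
        rcases pro_eq_N hN (by omega) hcl2e.2 hproN with h | h
        · omega
        · exact h
      -- d = 2e
      have hd2e : d ∣ 2*e := (hdiff (2*e) (by omega)).mp h2eM
      have hdne : d ≠ e := by
        intro h; rw [← h] at hcase
        have := (hdiff d hd1).mpr (dvd_refl d)
        omega
      have hdge : 2*e ≤ d := by
        obtain ⟨c, rfl⟩ := hed
        rcases c with _ | _ | c
        · omega
        · omega
        · have : e * 2 ≤ e * (c+1+1) := Nat.mul_le_mul_left e (by omega)
          omega
      have hdeq : d = 2*e := Nat.le_antisymm (Nat.le_of_dvd (by omega) hd2e) hdge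
      refine (hdiff (2*N) (by omega)).mpr ?_
      rw [hdeq]
      exact Nat.mul_dvd_mul_left 2 heN
    · -- tab (2N) p e = 2N : period stays
      have hde : d ∣ e := (hdiff e he1).mp hcase
      have hdeq : d = e := Nat.dvd_antisymm hde hed
      refine (hdiff (2*N) (by omega)).mpr ?_
      rw [hdeq]
      exact Dvd.dvd.mul_left heN 2

lemma per_pow : ∀ n, Per (2^n) := by
  intro n
  induction n with
  | zero =>
    intro p hp1 hp2
    have : p = 1 := by omega
    subst this
    exact tab_ge (le_refl 1) 1
  | succ n ih =>
    rw [pow_succ, mul_comm]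
    exact per_double (Nat.one_le_two_pow) ih


/-- full left self-distributivity. -/
lemma tab_ld {N : ℕ} (hN : 1 ≤ N) (hper : Per N) :
    ∀ a p, 1 ≤ p → p ≤ N → N - p ≤ a →
    ∀ b q, 1 ≤ q → q ≤ N → N - q ≤ b →
    ∀ r, 1 ≤ r → r ≤ N →
      tab N p (tab N q r) = tab N (tab N p q) (tab N p r) := by
  intro a
  induction a with
  | zero =>
    intro p hp1 hp2 hpa b q hq1 hq2 hqb r hr1 hr2
    have hpe : p = N := by omega
    rw [hpe]
    simp only [tab_ge (le_refl N)]
  | succ a iha =>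
    intro p hp1 hp2 hpa b q hq1 hq2 hqb r hr1 hr2
    rcases eq_or_lt_of_le hp2 with hpe | hpl
    · rw [hpe]
      simp only [tab_ge (le_refl N)]
    · induction b generalizing q r with
      | zero =>
        have hqe : q = N := by omega
        rw [hqe, tab_ge (le_refl N), hper p hp1 hp2, tab_ge (le_refl N)]
      | succ b ihb =>
        rcases eq_or_lt_of_le hq2 with hqe | hql
        · rw [hqe, tab_ge (le_refl N), hper p hp1 hp2, tab_ge (le_refl N)]
        · induction r with
          | zero => omega
          | succ k ihk =>
            rcases Nat.eq_or_lt_of_le hr1 with hk0 | hk1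
            · rw [← hk0, tab_one hql, tab_one hpl, tab_succ hpl hq1]
            · have hk1' : 1 ≤ k := by omega
              have hqkcl := tab_closure hql hk1'
              have hpqcl := tab_closure hpl hq1
              have hpkcl := tab_closure hpl hk1'
              -- LHS = p ⋆ ((q⋆k) ⋆ (q+1))
              rw [tab_succ hql hk1']
              -- apply b-IH at row q⋆k
              rw [ihb (tab N q k) (by omega) hqkcl.2 (by omega) (q+1) (by omega) (by omega)]
              -- rewrite p⋆(q⋆k) and p⋆(q+1)
              rw [ihk hk1' (by omega)]
              rw [tab_succ hpl hq1]
              -- apply a-IH at row p⋆q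
              rw [← iha (tab N p q) (by omega) hpqcl.2 (by omega)
                (N - tab N p k) (tab N p k) (by omega) hpkcl.2 (le_refl _)
                (p+1) (by omega) (by omega)]
              rw [← tab_succ hpl hk1']

lemma laverAxioms_tab (n : ℕ) : LaverAxioms (2^n) (tab (2^n)) := by
  have hN : 1 ≤ 2^n := Nat.one_le_two_pow
  refine ⟨?_, ?_, ?_⟩
  · intro p q hp hq
    simp only [Set.mem_Icc] at *
    rcases eq_or_lt_of_le hp.2 with he | hl
    · rw [he, tab_ge (le_refl _)]
      exact hq
    · have := tab_closure hl hq.1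
      omega
  · intro p hp
    simp only [Set.mem_Icc] at hp
    exact tab_first hp.1 hp.2
  · intro p q hp hq
    simp only [Set.mem_Icc] at *
    exact tab_sd hN (per_pow n) hp.1 hp.2 hq.1 hq.2

lemma tab_mem {N x y : ℕ} (hN : 1 ≤ N) (hx1 : 1 ≤ x) (hx2 : x ≤ N) (hy1 : 1 ≤ y)
    (hy2 : y ≤ N) : 1 ≤ tab N x y ∧ tab N x y ≤ N := by
  rcases eq_or_lt_of_le hx2 with he | hl
  · rw [he, tab_ge (le_refl _)]
    omega
  · have := tab_closure hl hy1
    omega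

end BackLaver

/-- 0 * p = p and p * 0 = 0 for all p, and * is left distributive. -/
theorem backLaver_basic (bstar : ℕ → ℕ → ℕ) (hb : IsBackLaver bstar) :
    (∀ p, bstar 0 p = p) ∧ (∀ p, bstar p 0 = 0) ∧
    (∀ p q r, bstar p (bstar q r) = bstar (bstar p q) (bstar p r)) := by
  open BackLaver in
  have key : ∀ n p q, p < 2^n → q < 2^n →
      bstar p q = 2^n - tab (2^n) (2^n - p) (2^n - q) :=
    fun n => hb n (tab (2^n)) (laverAxioms_tab n)
  refine ⟨?_, ?_, ?_⟩
  · intro p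
    have hp : p < 2^p := (Nat.lt_two_pow_self (n := p))
    rw [key p 0 p (by positivity) hp, Nat.sub_zero,
      BackLaver.tab_ge (le_refl _)]
    omega
  · intro p
    have hp : p < 2^p := (Nat.lt_two_pow_self (n := p))
    have hN : 1 ≤ 2^p := Nat.one_le_two_pow
    rw [key p p 0 hp (by positivity), Nat.sub_zero,
      BackLaver.per_pow p (2^p - p) (by omega) (by omega)]
    omega
  · intro p q r
    set n := p + q + r with hn
    have h2 : ∀ x : ℕ, x ≤ n → x < 2^n := by
      intro x hx
      calc x < 2^x := (Nat.lt_two_pow_self (n := x))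
        _ ≤ 2^n := Nat.pow_le_pow_right (by omega) hx
    have hp : p < 2^n := h2 p (by omega)
    have hq : q < 2^n := h2 q (by omega)
    have hr : r < 2^n := h2 r (by omega)
    have hN : 1 ≤ 2^n := Nat.one_le_two_pow
    set N := 2^n with hNdef
    have hmem : ∀ x : ℕ, x < N → 1 ≤ N - x ∧ N - x ≤ N := by intro x hx; omega
    have hu := BackLaver.tab_mem hN (hmem q hq).1 (hmem q hq).2 (hmem r hr).1 (hmem r hr).2
    have hv := BackLaver.tab_mem hN (hmem p hp).1 (hmem p hp).2 (hmem q hq).1 (hmem q hq).2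
    have hw := BackLaver.tab_mem hN (hmem p hp).1 (hmem p hp).2 (hmem r hr).1 (hmem r hr).2
    have hqr : bstar q r = N - tab N (N - q) (N - r) := key n q r hq hr
    have hpq : bstar p q = N - tab N (N - p) (N - q) := key n p q hp hq
    have hpr : bstar p r = N - tab N (N - p) (N - r) := key n p r hp hr
    rw [hqr, hpq, hpr]
    rw [key n p (N - tab N (N - q) (N - r)) hp (by omega),
      key n (N - tab N (N - p) (N - q)) (N - tab N (N - p) (N - r)) (by omega) (by omega)]
    rw [show N - (N - tab N (N - q) (N - r)) = tab N (N - q) (N - r) from by omega,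
      show N - (N - tab N (N - p) (N - q)) = tab N (N - p) (N - q) from by omega,
      show N - (N - tab N (N - p) (N - r)) = tab N (N - p) (N - r) from by omega]
    rw [BackLaver.tab_ld hN (BackLaver.per_pow n) (N - (N - p)) (N - p) (hmem p hp).1
      (hmem p hp).2 (le_refl _) (N - (N - q)) (N - q) (hmem q hq).1 (hmem q hq).2
      (le_refl _) (N - r) (hmem r hr).1 (hmem r hr).2]
end

section
/- Let * be the backwards Laver operation on nonnegative integers. If 0 < p < 2^m < 2^n and q is a nonnegative integer, then (p + 2^m) * q = p * q + 2^m if and only if (p + 2^n) * q = p * q + 2^n. -/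
def laverRow (F : ℕ → ℕ → ℕ) (a : ℕ) : ℕ → ℕ
  | 0 => a + 1
  | 1 => a + 1
  | (b+2) => F (laverRow F a (b+1)) (a+1)

def laverAux (N : ℕ) : ℕ → ℕ → ℕ → ℕ
  | 0, _, b => (b - 1) % N + 1
  | (d+1), a, b => if N - d ≤ a then laverAux N d a b else laverRow (laverAux N d) a b

def laver (N : ℕ) (a b : ℕ) : ℕ := laverAux N N a b

lemma aux_stab (N a b : ℕ) : ∀ d, N - a ≤ d → laverAux N d a b = laverAux N (N - a) a b := by
  intro d
  induction d with
  | zero => intro h; have : N - a = 0 := by omega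
            rw [this]
  | succ d ih =>
    intro h
    by_cases h' : N - a ≤ d
    · have hc : N - d ≤ a := by omega
      show (if N - d ≤ a then laverAux N d a b else _) = _
      rw [if_pos hc]; exact ih h'
    · have : N - a = d + 1 := by omega
      rw [this]

lemma laver_eq (N a b : ℕ) : laver N a b = laverAux N (N - a) a b :=
  aux_stab N a b N (by omega)

lemma aux_top (N a b : ℕ) (h : N ≤ a) : ∀ d, laverAux N d a b = (b - 1) % N + 1 := by
  intro d
  induction d with
  | zero => rfl
  | succ d ih =>
    show (if N - d ≤ a then laverAux N d a b else _) = _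
    rw [if_pos (by omega)]; exact ih

lemma laver_top (N a b : ℕ) (h : N ≤ a) : laver N a b = (b - 1) % N + 1 :=
  aux_top N a b h N

lemma laver_row_eq (N a b : ℕ) (h2 : a < N) :
    laver N a b = laverRow (laverAux N (N - a - 1)) a b := by
  rw [laver_eq]
  have h3 : N - a = (N - a - 1) + 1 := by omega
  rw [h3]
  show (if N - (N - a - 1) ≤ a then _ else _) = _
  rw [if_neg (by omega)]
  congr 2

lemma laver_one (N a : ℕ) (h2 : a < N) : laver N a 1 = a + 1 := by
  rw [laver_row_eq N a 1 h2]; rfl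

lemma laverAux_succ (N d a b : ℕ) :
    laverAux N (d+1) a b = if N - d ≤ a then laverAux N d a b else laverRow (laverAux N d) a b := rfl

lemma laverRow_step (F : ℕ → ℕ → ℕ) (a b : ℕ) :
    laverRow F a (b+2) = F (laverRow F a (b+1)) (a+1) := rfl

lemma aux_range (N : ℕ) : ∀ d a b, N - d ≤ a → 1 ≤ a → a ≤ N → 1 ≤ b →
    1 ≤ laverAux N d a b ∧ laverAux N d a b ≤ N ∧ (a < N → a < laverAux N d a b) := by
  intro d
  induction d with
  | zero =>
    intro a b h1 h2 h3 h4
    have ha : a = N := by omega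
    show 1 ≤ (b - 1) % N + 1 ∧ (b - 1) % N + 1 ≤ N ∧ _
    have := Nat.mod_lt (b - 1) (show 0 < N by omega)
    exact ⟨by omega, by omega, by omega⟩
  | succ d ih =>
    intro a b h1 h2 h3 h4
    rw [laverAux_succ]
    by_cases hc : N - d ≤ a
    · rw [if_pos hc]; exact ih a b hc h2 h3 h4
    · rw [if_neg hc]
      have haN : a < N := by omega
      have key : ∀ c, 1 ≤ c → a + 1 ≤ laverRow (laverAux N d) a c ∧ laverRow (laverAux N d) a c ≤ N := by
        intro c
        induction c with
        | zero => omega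
        | succ c ihc =>
          intro _
          match c, ihc with
          | 0, _ => show a + 1 ≤ a + 1 ∧ a + 1 ≤ N; omega
          | (c+1), ihc =>
            have hprev := ihc (by omega)
            rw [laverRow_step]
            set y := laverRow (laverAux N d) a (c+1) with hy
            by_cases hyN : y < N
            · have h5 : N - d ≤ y := by omega
              have := ih y (a+1) h5 (by omega) (by omega) (by omega)
              omega
            · have hyeq : y = N := by omega
              rw [hyeq, aux_top N N (a+1) (le_refl N) d]
              have : (a + 1 - 1) % N = a := Nat.mod_eq_of_lt haN
              omega
      have := key b h4
      exact ⟨by omega, by omega, fun _ => by omega⟩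

lemma laver_range (N a b : ℕ) (h2 : 1 ≤ a) (h3 : a ≤ N) (h4 : 1 ≤ b) :
    1 ≤ laver N a b ∧ laver N a b ≤ N ∧ (a < N → a < laver N a b) :=
  aux_range N N a b (by omega) h2 h3 h4

lemma laver_le (N a b : ℕ) (h2 : 1 ≤ a) (h3 : a ≤ N) (h4 : 1 ≤ b) : laver N a b ≤ N :=
  (laver_range N a b h2 h3 h4).2.1

lemma laver_pos (N a b : ℕ) (h2 : 1 ≤ a) (h3 : a ≤ N) (h4 : 1 ≤ b) : 1 ≤ laver N a b :=
  (laver_range N a b h2 h3 h4).1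

lemma laver_gt (N a b : ℕ) (h2 : 1 ≤ a) (h3 : a < N) (h4 : 1 ≤ b) : a < laver N a b :=
  (laver_range N a b h2 (by omega) h4).2.2 h3

lemma laver_succ (N a b : ℕ) (h2 : 1 ≤ a) (h3 : a < N) (h4 : 1 ≤ b) :
    laver N a (b+1) = laver N (laver N a b) (a+1) := by
  obtain ⟨c, rfl⟩ : ∃ c, b = c + 1 := ⟨b - 1, by omega⟩
  rw [laver_row_eq N a (c+2) h3, laverRow_step, ← laver_row_eq N a (c+1) h3]
  set y := laver N a (c+1) with hy
  have hygt : a < y := laver_gt N a (c+1) h2 h3 (by omega)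
  have hyle : y ≤ N := laver_le N a (c+1) h2 (by omega) (by omega)
  rw [laver_eq N y (a+1)]
  exact aux_stab N y (a+1) (N - a - 1) (by omega)

lemma laver_grow (N a : ℕ) (h2 : 1 ≤ a) (h3 : a < N) :
    ∀ b, 1 ≤ b → (∃ c, 1 ≤ c ∧ c ≤ b ∧ laver N a c = N) ∨ a + b ≤ laver N a b := by
  intro b
  induction b with
  | zero => omega
  | succ b ih =>
    intro _
    by_cases hb : 1 ≤ b
    · rcases ih hb with ⟨c, hc1, hc2, hc3⟩ | hgrow
      · exact Or.inl ⟨c, hc1, by omega, hc3⟩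
      · by_cases hN : laver N a b = N
        · exact Or.inl ⟨b, hb, by omega, hN⟩
        · have hlt : laver N a b < N := by
            have := laver_le N a b h2 (by omega) hb; omega
          right
          rw [laver_succ N a b h2 h3 hb]
          have := laver_gt N (laver N a b) (a+1) (by omega) hlt (by omega)
          omega
    · have hb1 : b = 0 := by omega
      subst hb1
      rw [laver_one N a h3]
      omega

lemma laver_hit (N a : ℕ) (h2 : 1 ≤ a) (h3 : a < N) :
    ∃ c, 1 ≤ c ∧ c ≤ N - a ∧ laver N a c = N := by
  rcases laver_grow N a h2 h3 (N - a) (by omega) with h | h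
  · exact h
  · exact ⟨N - a, by omega, le_refl _, by
      have := laver_le N a (N - a) h2 (by omega) (by omega); omega⟩

lemma laver_period (N a c0 : ℕ) (h2 : 1 ≤ a) (h3 : a < N) (hc0 : 1 ≤ c0)
    (hhit : laver N a c0 = N) : ∀ c, 1 ≤ c → laver N a (c0 + c) = laver N a c := by
  intro c
  induction c with
  | zero => omega
  | succ c ih =>
    intro _
    by_cases hc : 1 ≤ c
    · rw [show c0 + (c+1) = (c0 + c) + 1 by omega,
        laver_succ N a (c0 + c) h2 h3 (by omega), ih hc, ← laver_succ N a c h2 h3 hc]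
    · have : c = 0 := by omega
      subst this
      rw [show c0 + 1 = c0 + 1 by rfl, laver_succ N a c0 h2 h3 hc0, hhit,
        laver_top N N (a+1) (le_refl N), laver_one N a h3]
      have : (a + 1 - 1) % N = a := Nat.mod_eq_of_lt h3
      omega

lemma laver_period_mul (N a c0 : ℕ) (h2 : 1 ≤ a) (h3 : a < N) (hc0 : 1 ≤ c0)
    (hhit : laver N a c0 = N) : ∀ k c, 1 ≤ c → laver N a (c + k * c0) = laver N a c := by
  intro k
  induction k with
  | zero => intro c _; norm_num
  | succ k ih =>
    intro c hc
    rw [show c + (k+1) * c0 = c0 + (c + k * c0) by ring,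
      laver_period N a c0 h2 h3 hc0 hhit _ (by omega), ih c hc]

lemma laver_hit_mul (N a c0 : ℕ) (h2 : 1 ≤ a) (h3 : a < N) (hc0 : 1 ≤ c0)
    (hhit : laver N a c0 = N) : ∀ k, 1 ≤ k → laver N a (k * c0) = N := by
  intro k
  induction k with
  | zero => omega
  | succ k ih =>
    intro _
    by_cases hk : 1 ≤ k
    · rw [show (k+1) * c0 = c0 + k * c0 by ring,
        laver_period N a c0 h2 h3 hc0 hhit _ (Nat.mul_pos hk hc0), ih hk]
    · have : k = 0 := by omega
      subst this; simpa using hhit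

lemma laver_min_dvd (N a c0 : ℕ) (h2 : 1 ≤ a) (h3 : a < N) (hc0 : 1 ≤ c0)
    (hhit : laver N a c0 = N) (hmin : ∀ c, 1 ≤ c → c < c0 → laver N a c ≠ N) :
    ∀ b, 1 ≤ b → laver N a b = N → c0 ∣ b := by
  intro b hb hbhit
  by_contra hnd
  have hr : b % c0 ≠ 0 := fun h => hnd (Nat.dvd_of_mod_eq_zero h)
  have hrb : 1 ≤ b % c0 := by omega
  have hlt : b % c0 < c0 := Nat.mod_lt b (by omega)
  have : laver N a (b % c0 + b / c0 * c0) = laver N a (b % c0) :=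
    laver_period_mul N a c0 h2 h3 hc0 hhit (b / c0) (b % c0) hrb
  rw [Nat.mod_add_div' b c0] at this
  exact hmin (b % c0) hrb hlt (by rw [← this, hbhit])

def pim (M x : ℕ) : ℕ := (x - 1) % M + 1

lemma pim_spec (M x : ℕ) (hM : 1 ≤ M) :
    ∃ q, x - 1 = M * q + (pim M x - 1) ∧ 1 ≤ pim M x ∧ pim M x ≤ M := by
  refine ⟨(x-1)/M, ?_, by simp [pim], ?_⟩
  · have := Nat.div_add_mod (x-1) M
    simp only [pim]
    omega
  · have := Nat.mod_lt (x-1) (show 0 < M by omega)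
    simp only [pim]
    omega

lemma pim_eq (M x r q : ℕ) (h : x = M * q + r) (h1 : 1 ≤ r) (h2 : r ≤ M) :
    pim M x = r := by
  have hx1 : x - 1 = M * q + (r - 1) := by omega
  have h3 : (M * q + (r-1)) % M = (r-1) % M := Nat.mul_add_mod M q (r-1)
  rw [pim, hx1, h3, Nat.mod_eq_of_lt (by omega)]
  omega

lemma pim_self (M x : ℕ) (h1 : 1 ≤ x) (h2 : x ≤ M) : pim M x = x :=
  pim_eq M x x 0 (by omega) h1 h2

lemma pim_le (M x : ℕ) (hM : 1 ≤ M) : 1 ≤ pim M x ∧ pim M x ≤ M := by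
  obtain ⟨q, _, h1, h2⟩ := pim_spec M x hM
  exact ⟨h1, h2⟩

lemma laver_top' (M b : ℕ) (hM : 1 ≤ M) (hb : 1 ≤ b) : laver M M b = pim M b := by
  rw [laver_top M M b (le_refl M)]; rfl

lemma laver_one' (M : ℕ) (hM : 1 ≤ M) : laver M M 1 = 1 := by
  rw [laver_top M M 1 (le_refl M)]
  simp

lemma cong_base (M b : ℕ) (hM : 1 ≤ M) (hb : 1 ≤ b) :
    pim M (laver (2*M) (2*M) b) = laver M (pim M (2*M)) b := by
  have h1 : pim M (2*M) = M := pim_eq M (2*M) M 1 (by ring) hM (le_refl M)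
  rw [h1, laver_top' M b hM hb, laver_top (2*M) (2*M) b (le_refl _)]
  have h2 : (b-1) % (2*M) + 1 - 1 = (b-1) % (2*M) := by omega
  simp only [pim, h2]
  rw [Nat.mod_mod_of_dvd (b-1) ⟨2, by ring⟩]

lemma hper_mul (M : ℕ)
    (hper : ∀ z c, 1 ≤ z → z ≤ M → 1 ≤ c → laver M z (c + M) = laver M z c) :
    ∀ k z c, 1 ≤ z → z ≤ M → 1 ≤ c → laver M z (c + M * k) = laver M z c := by
  intro k
  induction k with
  | zero => intro z c _ _ _; norm_num
  | succ k ih =>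
    intro z c hz1 hz2 hc
    rw [show c + M * (k+1) = (c + M * k) + M by ring,
      hper z (c + M*k) hz1 hz2 (by omega), ih z c hz1 hz2 hc]

lemma laver_cong (M : ℕ) (hM : 1 ≤ M)
    (hper : ∀ z c, 1 ≤ z → z ≤ M → 1 ≤ c → laver M z (c + M) = laver M z c) :
    ∀ x b, 1 ≤ x → x ≤ 2*M → 1 ≤ b →
      pim M (laver (2*M) x b) = laver M (pim M x) b := by
  suffices H : ∀ t x, 2*M - x ≤ t → 1 ≤ x → x ≤ 2*M → ∀ b, 1 ≤ b →
      pim M (laver (2*M) x b) = laver M (pim M x) b by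
    intro x b h1 h2 h3; exact H (2*M) x (by omega) h1 h2 b h3
  intro t
  induction t with
  | zero =>
    intro x hx h1 h2 b h3
    have : x = 2*M := by omega
    subst this
    exact cong_base M b hM h3
  | succ t ih =>
    intro x hx h1 h2
    by_cases hxt : x = 2*M
    · intro b h3; subst hxt; exact cong_base M b hM h3
    have hxlt : x < 2*M := by omega
    obtain ⟨q, hq, ha1, ha2⟩ := pim_spec M x hM
    obtain ⟨a, hadef⟩ : ∃ a, pim M x = a := ⟨_, rfl⟩
    rw [hadef] at hq ha1 ha2
    simp only [hadef]
    have hxa : x = M * q + a := by omega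
    clear hq hadef
    intro b h3
    induction b with
    | zero => omega
    | succ b ihb =>
      by_cases hb1 : 1 ≤ b
      · have hy1 : 1 ≤ laver (2*M) x b := laver_pos (2*M) x b h1 (by omega) hb1
        have hy2 : laver (2*M) x b ≤ 2*M := laver_le (2*M) x b h1 (by omega) hb1
        have hygt : x < laver (2*M) x b := laver_gt (2*M) x b h1 hxlt hb1
        rw [laver_succ (2*M) x b h1 hxlt hb1,
          ih (laver (2*M) x b) (by omega) hy1 hy2 (x+1) (by omega),
          ihb hb1]
        set w := laver M a b with hwdef
        have hw1 : 1 ≤ w := laver_pos M a b ha1 ha2 hb1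
        have hw2 : w ≤ M := laver_le M a b ha1 ha2 hb1
        by_cases haM : a < M
        · rw [laver_succ M a b ha1 haM hb1]
          have hx1 : x + 1 = (a+1) + M * q := by omega
          rw [hx1, hper_mul M hper q w (a+1) hw1 hw2 (by omega)]
        · have haM' : a = M := by omega
          rw [haM'] at hwdef ⊢
          rw [laver_top' M (b+1) hM (by omega)]
          have hwb : w = pim M b := by rw [hwdef, laver_top' M b hM hb1]
          obtain ⟨q', hq', hr1, hr2⟩ := pim_spec M b hM
          set r := pim M b with hrdef
          have hbq : b = M * q' + r := by omega
          have hx1 : x + 1 = 1 + M * (q+1) := by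
            have : M * (q+1) = M * q + M := by ring
            omega
          rw [hx1, hper_mul M hper (q+1) w 1 hw1 hw2 (by omega)]
          by_cases hwM : w < M
          · rw [laver_one M w hwM, hwb]
            have : pim M (b+1) = r + 1 :=
              pim_eq M (b+1) (r+1) q' (by omega) (by omega) (by omega)
            omega
          · have hwMeq : w = M := by omega
            have hrM : r = M := by omega
            rw [hwMeq, laver_one' M hM]
            have : pim M (b+1) = 1 := by
              refine pim_eq M (b+1) 1 (q'+1) ?_ (by omega) hM
              have : M * (q'+1) = M * q' + M := by ring
              omega
            omega
      · have hb0 : b = 0 := by omega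
        subst hb0
        rw [laver_one (2*M) x hxlt]
        by_cases haM : a < M
        · rw [laver_one M a haM]
          exact pim_eq M (x+1) (a+1) q (by omega) (by omega) (by omega)
        · have haM' : a = M := by omega
          rw [haM', laver_one' M hM]
          have : pim M (x+1) = 1 := by
            refine pim_eq M (x+1) 1 (q+1) ?_ (by omega) hM
            have : M * (q+1) = M * q + M := by ring
            omega
          omega

lemma pim_decomp (M v : ℕ) (hM : 1 ≤ M) (h1 : 1 ≤ v) (h2 : v ≤ 2*M) :
    v = pim M v ∨ v = pim M v + M := by
  obtain ⟨q, hq, hp1, hp2⟩ := pim_spec M v hM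
  have hv : v = M * q + pim M v := by omega
  have hq1 : q ≤ 1 := by
    by_contra hc
    push_neg at hc
    have : M * 2 ≤ M * q := Nat.mul_le_mul_left M hc
    omega
  interval_cases q <;> omega

def PER (M : ℕ) : Prop := ∀ z c, 1 ≤ z → z ≤ M → 1 ≤ c → laver M z (c + M) = laver M z c

lemma rowHigh (M x b : ℕ) (hM : 1 ≤ M) (hper : PER M) (hx1 : M < x) (hx2 : x < 2*M)
    (hb : 1 ≤ b) : laver (2*M) x b = laver M (x - M) b + M := by
  have hpx : pim M x = x - M := pim_eq M x (x - M) 1 (by omega) (by omega) (by omega)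
  have hc := laver_cong M hM hper x b (by omega) (by omega) hb
  rw [hpx] at hc
  have hv1 : x < laver (2*M) x b := laver_gt (2*M) x b (by omega) (by omega) hb
  have hv2 : laver (2*M) x b ≤ 2*M := laver_le (2*M) x b (by omega) (by omega) hb
  have hvp : pim M (laver (2*M) x b) = laver (2*M) x b - M :=
    pim_eq M _ (laver (2*M) x b - M) 1 (by omega) (by omega) (by omega)
  omega

lemma rowMid (M b : ℕ) (hM : 1 ≤ M) (hper : PER M) (hb : 1 ≤ b) :
    laver (2*M) M b = pim M b + M := by
  have hpx : pim M M = M := pim_self M M hM (le_refl M)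
  have hc := laver_cong M hM hper M b hM (by omega) hb
  rw [hpx, laver_top' M b hM hb] at hc
  have hv1 : M < laver (2*M) M b := laver_gt (2*M) M b hM (by omega) hb
  have hv2 : laver (2*M) M b ≤ 2*M := laver_le (2*M) M b hM (by omega) hb
  have hvp : pim M (laver (2*M) M b) = laver (2*M) M b - M :=
    pim_eq M _ (laver (2*M) M b - M) 1 (by omega) (by omega) (by omega)
  omega

def DVD (N : ℕ) : Prop := ∀ x, 1 ≤ x → x < N →
  ∃ c0, 1 ≤ c0 ∧ c0 ∣ N ∧ laver N x c0 = N ∧ (∀ b, 1 ≤ b → laver N x b = N → c0 ∣ b)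

lemma per_of_dvd (N : ℕ) (hN : 1 ≤ N) (h : DVD N) : PER N := by
  intro z c hz1 hz2 hc
  by_cases hzN : z < N
  · obtain ⟨c0, hc1, ⟨t, ht⟩, hc3, _⟩ := h z hz1 hzN
    have ht1 : 1 ≤ t := by
      rcases Nat.eq_zero_or_pos t with h0 | h1
      · subst h0; omega
      · exact h1
    have hN2 : N = t * c0 := by rw [ht]; ring
    have h8 := laver_period_mul N z c0 hz1 hzN hc1 hc3 t c hc
    have h7 : c + N = c + t * c0 := by omega
    rw [h7]; exact h8
  · have hzeq : z = N := by omega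
    rw [hzeq]
    rw [laver_top' N (c+N) hN (by omega), laver_top' N c hN hc]
    have : c + N - 1 = c - 1 + N := by omega
    rw [pim, pim, this, Nat.add_mod_right]

theorem laver_dvd : ∀ K, DVD (2^K) := by
  intro K
  induction K with
  | zero => intro x h1 h2; omega
  | succ K IH =>
    have hM : 1 ≤ 2^K := Nat.one_le_two_pow
    set M := 2^K with hMdef
    have hperM : PER M := per_of_dvd M hM IH
    have h2M : 2^(K+1) = 2*M := by rw [hMdef]; ring
    rw [h2M]
    intro x hx1 hx2
    by_cases hxM : x = M
    · -- c0 = M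
      subst hxM
      refine ⟨M, hM, ⟨2, by ring⟩, ?_, ?_⟩
      · rw [rowMid M M hM hperM hM, pim_self M M hM (le_refl M)]
        omega
      · intro b hb hbhit
        rw [rowMid M b hM hperM hb] at hbhit
        obtain ⟨q, hq, hp1, hp2⟩ := pim_spec M b hM
        have : pim M b = M := by omega
        refine ⟨q + 1, ?_⟩
        have : M * (q+1) = M * q + M := by ring
        omega
    by_cases hxhi : M < x
    · -- row above the middle
      obtain ⟨c0, hc1, hc2, hc3, hc4⟩ := IH (x - M) (by omega) (by omega)
      refine ⟨c0, hc1, hc2.mul_left 2, ?_, ?_⟩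
      · rw [rowHigh M x c0 hM hperM hxhi hx2 hc1, hc3]; ring
      · intro b hb hbhit
        rw [rowHigh M x b hM hperM hxhi hx2 hb] at hbhit
        exact hc4 b hb (by omega)
    -- row below the middle
    have hxlo : x < M := by omega
    obtain ⟨c0, hc1, hc2, hc3, hc4⟩ := IH x hx1 hxlo
    have hpx : pim M x = x := pim_self M x hx1 (by omega)
    have hcong : ∀ b, 1 ≤ b → pim M (laver (2*M) x b) = laver M x b := by
      intro b hb
      rw [laver_cong M hM hperM x b hx1 (by omega) hb, hpx]
    have hv := hcong c0 hc1
    rw [hc3] at hv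
    have hv1 : 1 ≤ laver (2*M) x c0 := laver_pos (2*M) x c0 hx1 (by omega) hc1
    have hv2 : laver (2*M) x c0 ≤ 2*M := laver_le (2*M) x c0 hx1 (by omega) hc1
    have hvcases : laver (2*M) x c0 = M ∨ laver (2*M) x c0 = 2*M := by
      rcases pim_decomp M (laver (2*M) x c0) hM hv1 hv2 with h | h <;> omega
    rcases hvcases with hvM | hv2M
    · -- period doubles : c0' = 2*c0
      have key : ∀ c, 1 ≤ c → c ≤ c0 → laver (2*M) x (c0 + c) = laver M x c + M := by
        intro c
        induction c with
        | zero => omega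
        | succ c ihc =>
          intro _ hcc0
          by_cases hc1' : 1 ≤ c
          · have hu1 : 1 ≤ laver M x c := laver_pos M x c hx1 (by omega) hc1'
            have hu2 : laver M x c ≤ M := laver_le M x c hx1 (by omega) hc1'
            have huM : laver M x c < M := by
              rcases Nat.lt_or_ge (laver M x c) M with h | h
              · exact h
              · exfalso
                have : c0 ∣ c := hc4 c hc1' (by omega)
                have := Nat.le_of_dvd (by omega) this
                omega
            rw [show c0 + (c+1) = (c0 + c) + 1 by ring,
              laver_succ (2*M) x (c0 + c) hx1 (by omega) (by omega),
              ihc hc1' (by omega),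
              rowHigh M (laver M x c + M) (x+1) hM hperM (by omega) (by omega) (by omega),
              Nat.add_sub_cancel, ← laver_succ M x c hx1 hxlo hc1']
          · have : c = 0 := by omega
            subst this
            rw [laver_succ (2*M) x c0 hx1 (by omega) hc1, hvM,
              rowMid M (x+1) hM hperM (by omega),
              pim_self M (x+1) (by omega) (by omega), laver_one M x hxlo]
      have hit2 : laver (2*M) x (2*c0) = 2*M := by
        have := key c0 hc1 (le_refl c0)
        rw [show c0 + c0 = 2*c0 by ring] at this
        rw [this, hc3]
        ring
      refine ⟨2*c0, by omega, mul_dvd_mul_left 2 hc2, hit2, ?_⟩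
      · intro b hb hbhit
        have hMb : laver M x b = M := by
          have h5 := hcong b hb
          rw [hbhit, pim_eq M (2*M) M 1 (by ring) hM (le_refl M)] at h5
          omega
        obtain ⟨s, hs⟩ := hc4 b hb hMb
        have hs1 : 1 ≤ s := by
          rcases Nat.eq_zero_or_pos s with h0 | h1
          · subst h0; omega
          · exact h1
        rcases Nat.even_or_odd s with ⟨r, hr⟩ | ⟨r, hr⟩
        · have : c0 * s = 2*c0*r := by rw [hr]; ring
          exact ⟨r, by omega⟩
        · exfalso
          have hb' : b = c0 + r * (2*c0) := by
            have : c0 * s = c0 + r * (2*c0) := by rw [hr]; ring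
            omega
          have h9 : laver (2*M) x b = laver (2*M) x c0 := by
            rw [hb']
            exact laver_period_mul (2*M) x (2*c0) hx1 (by omega) (by omega) hit2 r c0 hc1
          rw [hbhit, hvM] at h9
          omega
    · -- same period
      refine ⟨c0, hc1, hc2.mul_left 2, hv2M, ?_⟩
      intro b hb hbhit
      have hMb : laver M x b = M := by
        have h5 := hcong b hb
        rw [hbhit] at h5
        have h6 : pim M (2*M) = M := pim_eq M (2*M) M 1 (by ring) hM (le_refl M)
        omega
      exact hc4 b hb hMb

lemma per_pow (K : ℕ) : PER (2^K) :=
  per_of_dvd (2^K) Nat.one_le_two_pow (laver_dvd K)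

lemma laver_hitN (K x : ℕ) (h1 : 1 ≤ x) (h2 : x ≤ 2^K) : laver (2^K) x (2^K) = 2^K := by
  by_cases hx : x < 2^K
  · obtain ⟨c0, hc1, ⟨t, ht⟩, hc3, _⟩ := laver_dvd K x h1 hx
    have ht1 : 1 ≤ t := by
      rcases Nat.eq_zero_or_pos t with h0 | hp
      · exfalso
        rw [h0, Nat.mul_zero] at ht
        have : (1:ℕ) ≤ 2^K := Nat.one_le_two_pow
        omega
      · exact hp
    have := laver_hit_mul (2^K) x c0 h1 hx hc1 hc3 t ht1
    rw [show t * c0 = c0 * t by ring, ← ht] at this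
    exact this
  · have : x = 2^K := by omega
    rw [this, laver_top' (2^K) (2^K) Nat.one_le_two_pow Nat.one_le_two_pow,
      pim_self (2^K) (2^K) Nat.one_le_two_pow (le_refl _)]

theorem laver_axioms (K : ℕ) : LaverAxioms (2^K) (laver (2^K)) := by
  have hN : 1 ≤ 2^K := Nat.one_le_two_pow
  refine ⟨?_, ?_, ?_⟩
  · rintro p q ⟨hp1, hp2⟩ ⟨hq1, hq2⟩
    exact ⟨laver_pos (2^K) p q hp1 hp2 hq1, laver_le (2^K) p q hp1 hp2 hq1⟩
  · rintro p ⟨hp1, hp2⟩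
    by_cases hp : p < 2^K
    · rw [laver_one (2^K) p hp, Nat.mod_eq_of_lt hp]
    · have hpe : p = 2^K := by omega
      rw [hpe, laver_one' (2^K) hN, Nat.mod_self]
  · rintro p q ⟨hp1, hp2⟩ ⟨hq1, hq2⟩
    by_cases hq : q < 2^K
    · -- star q 1 = q + 1
      rw [laver_one (2^K) q hq]
      by_cases hp : p < 2^K
      · rw [laver_one (2^K) p hp]
        exact laver_succ (2^K) p q hp1 hp hq1
      · have hpe : p = 2^K := by omega
        subst hpe
        rw [laver_one' (2^K) hN,
          laver_top' (2^K) (q+1) hN (by omega),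
          laver_top' (2^K) q hN hq1,
          pim_self (2^K) (q+1) (by omega) (by omega),
          pim_self (2^K) q hq1 (by omega),
          laver_one (2^K) q hq]
    · have hqe : q = 2^K := by omega
      subst hqe
      rw [laver_one' (2^K) hN]
      have hpN : laver (2^K) p (2^K) = 2^K := laver_hitN K p hp1 hp2
      rw [hpN, laver_top' (2^K) (laver (2^K) p 1) hN (laver_pos _ _ _ hp1 hp2 (by omega)),
        pim_self (2^K) _ (laver_pos _ _ _ hp1 hp2 (by omega)) (laver_le _ _ _ hp1 hp2 (by omega))]

lemma pim_pim (j H v : ℕ) (hd : j ∣ H) : pim j (pim H v) = pim j v := by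
  simp only [pim, Nat.add_sub_cancel]
  rw [Nat.mod_mod_of_dvd _ hd]

lemma cong_iter : ∀ d j x b, 1 ≤ x → x ≤ 2^(j+d) → 1 ≤ b →
    pim (2^j) (laver (2^(j+d)) x b) = laver (2^j) (pim (2^j) x) b := by
  intro d
  induction d with
  | zero =>
    intro j x b h1 h2 h3
    simp only [Nat.add_zero] at h2 ⊢
    rw [pim_self (2^j) x h1 (by simpa using h2),
      pim_self (2^j) _ (laver_pos _ x b h1 (by simpa using h2) h3)
        (laver_le _ x b h1 (by simpa using h2) h3)]
  | succ d ih =>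
    intro j x b h1 h2 h3
    have hpow : 2^(j+(d+1)) = 2*2^(j+d) := by
      rw [show j+(d+1) = (j+d)+1 by omega, pow_succ]; ring
    have hd : (2:ℕ)^j ∣ 2^(j+d) := pow_dvd_pow 2 (by omega)
    have hx2 : x ≤ 2*2^(j+d) := by omega
    have hv1 : 1 ≤ laver (2^(j+(d+1))) x b := laver_pos _ x b h1 (by omega) h3
    rw [← pim_pim (2^j) (2^(j+d)) _ hd, hpow,
      laver_cong (2^(j+d)) Nat.one_le_two_pow (per_pow (j+d)) x b h1 hx2 h3,
      ih j (pim (2^(j+d)) x) b (pim_le _ x Nat.one_le_two_pow).1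
        (pim_le _ x Nat.one_le_two_pow).2 h3,
      pim_pim (2^j) (2^(j+d)) x hd]

lemma period_half (s : ℕ) : ∀ y c k, 1 ≤ y → y < 2^(s+1) → 1 ≤ c →
    laver (2^(s+1)) y (c + 2^s * k) = laver (2^(s+1)) y c := by
  intro y c k hy1 hy2 hc
  obtain ⟨c0, hc1, hc2, hc3, hc4⟩ := laver_dvd (s+1) y hy1 hy2
  obtain ⟨e, he1, he2, he3⟩ := laver_hit (2^(s+1)) y hy1 hy2
  have hdvd_e : c0 ∣ e := hc4 e he1 he3
  have hc0e : c0 ≤ e := Nat.le_of_dvd (by omega) hdvd_e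
  have hc0lt : c0 < 2^(s+1) := by omega
  obtain ⟨i, hi, hieq⟩ := (Nat.dvd_prime_pow Nat.prime_two).mp hc2
  have his : i ≤ s := by
    by_contra hcon
    have : i = s+1 := by omega
    rw [this] at hieq
    omega
  have hdvd_half : c0 ∣ 2^s := hieq ▸ pow_dvd_pow 2 his
  obtain ⟨u, hu⟩ := hdvd_half
  have : 2^s * k = (u * k) * c0 := by rw [hu]; ring
  rw [this]
  exact laver_period_mul (2^(s+1)) y c0 hy1 hy2 hc1 hc3 (u*k) c hc

lemma sstep (s : ℕ) : ∀ a, 2^s < a → a < 2^(s+1) → ∀ c, 1 ≤ c →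
    (laver (2^(s+2)) a c = laver (2^(s+1)) a c + 2^(s+1) ↔
      laver (2^(s+1)) (a - 2^s) c = laver (2^(s+1)) a c) := by
  have hH : 1 ≤ 2^s := Nat.one_le_two_pow
  have hpow1 : (2:ℕ)^(s+1) = 2*2^s := by rw [pow_succ]; ring
  have hpow2 : (2:ℕ)^(s+2) = 2*2^(s+1) := by rw [pow_succ]; ring
  set H := 2^s with hHdef
  set M := 2^(s+1) with hMdef
  have hM2 : M = 2*H := hpow1
  have hperH : PER H := per_pow s
  have hperM : PER M := per_pow (s+1)
  -- candidate lemmas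
  have cand1 : ∀ a c, 1 ≤ a → a ≤ M → 1 ≤ c →
      laver (2*M) a c = laver M a c ∨ laver (2*M) a c = laver M a c + M := by
    intro a c h1 h2 h3
    have hc := laver_cong M Nat.one_le_two_pow hperM a c h1 (by omega) h3
    rw [pim_self M a h1 h2] at hc
    have hv1 : 1 ≤ laver (2*M) a c := laver_pos _ a c h1 (by omega) h3
    have hv2 : laver (2*M) a c ≤ 2*M := laver_le _ a c h1 (by omega) h3
    rcases pim_decomp M (laver (2*M) a c) Nat.one_le_two_pow hv1 hv2 with h | h <;> omega
  have cand2 : ∀ a c, H < a → a < M → 1 ≤ c →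
      laver M (a - H) c = laver M a c ∨ laver M (a - H) c + H = laver M a c := by
    intro a c h1 h2 h3
    have e1 : pim H (a - H) = a - H := pim_self H (a-H) (by omega) (by omega)
    have e2 : pim H a = a - H := pim_eq H a (a-H) 1 (by omega) (by omega) (by omega)
    have hcG := laver_cong H hH hperH (a-H) c (by omega) (by omega) h3
    have hcW := laver_cong H hH hperH a c (by omega) (by omega) h3
    rw [e1] at hcG
    rw [e2] at hcW
    rw [← hM2] at hcG hcW
    have hw1 : a < laver M a c := laver_gt M a c (by omega) h2 h3
    have hw2 : laver M a c ≤ M := laver_le M a c (by omega) (by omega) h3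
    have hwp : pim H (laver M a c) = laver M a c - H :=
      pim_eq H _ (laver M a c - H) 1 (by omega) (by omega) (by omega)
    have hg1 : 1 ≤ laver M (a-H) c := laver_pos M (a-H) c (by omega) (by omega) h3
    have hg2 : laver M (a-H) c ≤ M := laver_le M (a-H) c (by omega) (by omega) h3
    have := pim_decomp H (laver M (a-H) c) hH hg1 (by omega)
    rcases this with h | h <;> omega
  -- main double induction
  suffices Hyp : ∀ t a, M - a ≤ t → 2^s < a → a < M → ∀ c, 1 ≤ c →
      (laver (2*M) a c = laver M a c + M ↔ laver M (a - H) c = laver M a c) by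
    intro a h1 h2 c h3
    have := Hyp M a (by omega) h1 h2 c h3
    rw [hpow2]
    exact this
  intro t
  induction t with
  | zero => intro a ht h1 h2; omega
  | succ t iht =>
    intro a ht h1 h2 c
    induction c with
    | zero => omega
    | succ c ihc =>
      intro _
      by_cases hc1 : 1 ≤ c
      · have IHc := ihc hc1
        -- abbreviations
        have hwgt : a < laver M a c := laver_gt M a c (by omega) h2 hc1
        have hwle : laver M a c ≤ M := laver_le M a c (by omega) (by omega) hc1
        have hVrec : laver (2*M) a (c+1) = laver (2*M) (laver (2*M) a c) (a+1) :=
          laver_succ (2*M) a c (by omega) (by omega) hc1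
        have hWrec : laver M a (c+1) = laver M (laver M a c) (a+1) :=
          laver_succ M a c (by omega) h2 hc1
        have hGrec : laver M (a-H) (c+1) = laver M (laver M (a-H) c) (a-H+1) :=
          laver_succ M (a-H) c (by omega) (by omega) hc1
        rcases cand1 a c (by omega) (by omega) hc1 with hVc | hVc
        · -- bit unset: V c = w c, so G c = w c - H
          have hGc : laver M (a-H) c + H = laver M a c := by
            rcases cand2 a c h1 h2 hc1 with h | h
            · exfalso
              have := IHc.mpr h
              omega
            · exact h
          by_cases hwM : laver M a c = M
          · -- B1
            have hV1 : laver (2*M) a (c+1) = laver M a (c+1) + M := by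
              rw [hVrec, hVc, hwM, rowMid M (a+1) Nat.one_le_two_pow hperM (by omega),
                hWrec, hwM, laver_top' M (a+1) Nat.one_le_two_pow (by omega)]
            have hG1 : laver M (a-H) (c+1) = laver M a (c+1) := by
              have hGcH : laver M (a-H) c = H := by omega
              rw [hGrec, hGcH, hWrec, hwM,
                laver_top' M (a+1) Nat.one_le_two_pow (by omega),
                pim_self M (a+1) (by omega) (by omega), hM2,
                rowMid H (a-H+1) hH hperH (by omega),
                pim_self H (a-H+1) (by omega) (by omega)]
              omega
            constructor
            · intro _; exact hG1
            · intro _; exact hV1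
          · -- B2 : use outer induction at row w c
            have hwltM : laver M a c < M := by omega
            have hstep := iht (laver M a c) (by omega) (by omega) hwltM (a+1) (by omega)
            have hGhalf : laver M (laver M a c - H) (a - H + 1 + H) =
                laver M (laver M a c - H) (a - H + 1) := by
              have := period_half s (laver M a c - H) (a - H + 1) 1 (by omega) (by omega) (by omega)
              rw [← hMdef] at this
              simpa using this
            have harg : a - H + 1 + H = a + 1 := by omega
            rw [harg] at hGhalf
            have hGc' : laver M (a-H) c = laver M a c - H := by omega
            rw [hVrec, hVc, hWrec, hGrec, hGc', ← hGhalf]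
            exact hstep
        · -- bit set: V c = w c + M, so G c = w c
          have hGc : laver M (a-H) c = laver M a c := IHc.mp hVc
          by_cases hwM : laver M a c = M
          · -- A1
            have hV1 : laver (2*M) a (c+1) = laver M a (c+1) := by
              rw [hVrec, hVc, hwM, show M + M = 2*M by ring,
                laver_top' (2*M) (a+1) (by omega) (by omega),
                hWrec, hwM, laver_top' M (a+1) Nat.one_le_two_pow (by omega),
                pim_self (2*M) (a+1) (by omega) (by omega),
                pim_self M (a+1) (by omega) (by omega)]
            have hG1 : laver M (a-H) (c+1) ≠ laver M a (c+1) := by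
              rw [hGrec, hGc, hwM, laver_top' M (a-H+1) Nat.one_le_two_pow (by omega),
                hWrec, hwM, laver_top' M (a+1) Nat.one_le_two_pow (by omega),
                pim_self M (a-H+1) (by omega) (by omega),
                pim_self M (a+1) (by omega) (by omega)]
              omega
            constructor
            · intro hcon; exfalso; rw [hV1] at hcon; omega
            · intro hcon; exact absurd hcon hG1
          · -- A2
            have hwltM : laver M a c < M := by omega
            have hV1 : laver (2*M) a (c+1) = laver M a (c+1) + M := by
              rw [hVrec, hVc, rowHigh M (laver M a c + M) (a+1) Nat.one_le_two_pow hperM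
                (by omega) (by omega) (by omega), Nat.add_sub_cancel, hWrec]
            have hG1 : laver M (a-H) (c+1) = laver M a (c+1) := by
              have hph := period_half s (laver M a c) (a - H + 1) 1 (by omega) (by omega) (by omega)
              rw [← hMdef] at hph
              have harg : a - H + 1 + 2^s * 1 = a + 1 := by
                rw [← hHdef]; omega
              rw [harg] at hph
              rw [hGrec, hGc, hWrec, ← hph]
            constructor
            · intro _; exact hG1
            · intro _; exact hV1
      · -- c = 0 : base case c+1 = 1
        have : c = 0 := by omega
        subst this
        rw [laver_one (2*M) a (by omega), laver_one M a h2, laver_one M (a-H) (by omega)]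
        constructor
        · intro hcon; omega
        · intro hcon; omega

lemma cong_iterK (j K x b : ℕ) (hj : j ≤ K) (h1 : 1 ≤ x) (h2 : x ≤ 2^K) (h3 : 1 ≤ b) :
    pim (2^j) (laver (2^K) x b) = laver (2^j) (pim (2^j) x) b := by
  have h := cong_iter (K - j) j x b h1
    (by rw [show j + (K-j) = K by omega]; exact h2) h3
  rw [show j + (K - j) = K by omega] at h
  exact h

/-- if 0 < p < 2^m < 2^n then
(p + 2^m) * q = p * q + 2^m ↔ (p + 2^n) * q = p * q + 2^n. -/
theorem backLaver_add_pow_two (bstar : ℕ → ℕ → ℕ) (hb : IsBackLaver bstar) :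
    ∀ p q m n : ℕ, 0 < p → p < 2 ^ m → m < n →
      (bstar (p + 2 ^ m) q = bstar p q + 2 ^ m ↔
        bstar (p + 2 ^ n) q = bstar p q + 2 ^ n) := by
  intro p q m n hp hpm hmn
  set K := n + 1 + q with hKdef
  have hq2K : q < 2^K := by
    have h1 : K < 2^K := Nat.lt_two_pow_self
    omega
  have hmn2 : (2:ℕ)^m ≤ 2^n := Nat.pow_le_pow_right (by omega) (by omega)
  have hn1K : (2:ℕ)^(n+1) ≤ 2^K := Nat.pow_le_pow_right (by omega) (by omega)
  have hpow_n1 : (2:ℕ)^(n+1) = 2*2^n := by rw [pow_succ]; ring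
  have hpK : p < 2^K := by omega
  have hax := laver_axioms K
  set N := 2^K with hNdef
  set B := N - q with hBdef
  have hB1 : 1 ≤ B := by omega
  have hB2 : B ≤ N := by omega
  have e0 : bstar p q = N - laver N (N - p) B := hb K (laver N) hax p q hpK hq2K
  set A := N - p with hAdef
  have hA1 : 1 ≤ A := by omega
  have hA2 : A < N := by omega
  set E := laver N A B with hEdef
  have hE1 : A < E := laver_gt N A B hA1 hA2 hB1
  have hE2 : E ≤ N := laver_le N A B hA1 (by omega) hB1
  -- the main per-level claim
  have claim : ∀ j, p < 2^j → j < n + 1 →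
      ((bstar (p + 2^j) q = bstar p q + 2^j) ↔
        ¬ (laver (2^(j+1)) (2^j - p) B = laver (2^(j+1)) (2^(j+1) - p) B)) := by
    intro j hpj hjn
    have hj1K : j + 1 ≤ K := by omega
    have h2j1 : (2:ℕ)^(j+1) ≤ 2^K := Nat.pow_le_pow_right (by omega) hj1K
    have hpowj : (2:ℕ)^(j+1) = 2*2^j := by rw [pow_succ]; ring
    have h2j : (1:ℕ) ≤ 2^j := Nat.one_le_two_pow
    have hpjN : p + 2^j < N := by omega
    have ej : bstar (p + 2^j) q = N - laver N (N - (p + 2^j)) B :=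
      hb K (laver N) hax (p + 2^j) q hpjN hq2K
    have hsub : N - (p + 2^j) = A - 2^j := by omega
    rw [hsub] at ej
    set D := laver N (A - 2^j) B with hDdef
    have hAj1 : 1 ≤ A - 2^j := by omega
    have hAj2 : A - 2^j < N := by omega
    have hD1 : A - 2^j < D := laver_gt N (A - 2^j) B hAj1 hAj2 hB1
    have hD2 : D ≤ N := laver_le N (A - 2^j) B hAj1 (by omega) hB1
    -- congruence at level j
    have hpimA : pim (2^j) (A - 2^j) = pim (2^j) A := by
      have h9 : A - 1 = (A - 2^j - 1) + 2^j := by omega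
      simp only [pim]
      rw [h9, Nat.add_mod_right]
    have hcD := cong_iterK j K (A - 2^j) B (by omega) hAj1 (by omega) hB1
    have hcE := cong_iterK j K A B (by omega) hA1 (by omega) hB1
    rw [hpimA] at hcD
    rw [← hNdef] at hcD hcE
    have hDE : pim (2^j) D = pim (2^j) E := by rw [hDdef, hEdef, hcD, hcE]
    -- two candidates
    obtain ⟨qd, hqd, hrd1, hrd2⟩ := pim_spec (2^j) D h2j
    obtain ⟨qe, hqe, hre1, hre2⟩ := pim_spec (2^j) E h2j
    rw [hDE] at hqd
    have hcand : D = E ∨ E = D + 2^j := by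
      have hqe_lt : qe < qd + 2 := by
        have hmul : 2^j * qe < 2^j * (qd + 2) := by
          have : (2:ℕ)^j * (qd + 2) = 2^j * qd + 2^j * 2 := by ring
          omega
        exact Nat.lt_of_mul_lt_mul_left hmul
      have hqd_le : qd ≤ qe := by
        have hmul : 2^j * qd < 2^j * (qe + 1) := by
          have : (2:ℕ)^j * (qe + 1) = 2^j * qe + 2^j := by ring
          omega
        have := Nat.lt_of_mul_lt_mul_left hmul
        omega
      rcases Nat.lt_or_ge qe (qd + 1) with h | h
      · have : qe = qd := by omega
        subst this
        left; omega
      · have : qe = qd + 1 := by omega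
        subst this
        right
        have : (2:ℕ)^j * (qd + 1) = 2^j * qd + 2^j := by ring
        omega
    -- LHS of claim ⟺ E = D + 2^j
    have hE2j : 2^j < E := by omega
    have lhs_iff : (bstar (p + 2^j) q = bstar p q + 2^j) ↔ E = D + 2^j := by
      rw [ej, e0]
      rcases hcand with h | h
      · constructor
        · intro hcon; omega
        · intro hcon; omega
      · constructor
        · intro _; exact h
        · intro _; omega
    -- now relate D = E to level j+1 equality
    obtain ⟨T', hT'⟩ : ∃ T', 2^(K - (j+1)) = T' + 1 :=
      ⟨2^(K-(j+1)) - 1, by have : (1:ℕ) ≤ 2^(K-(j+1)) := Nat.one_le_two_pow; omega⟩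
    have hNsplit : N = 2^(j+1) * T' + 2^(j+1) := by
      rw [hNdef, show K = (j+1) + (K - (j+1)) by omega, pow_add, hT']
      ring
    have hpimD : pim (2^(j+1)) (A - 2^j) = 2^j - p :=
      pim_eq (2^(j+1)) (A - 2^j) (2^j - p) T' (by omega) (by omega) (by omega)
    have hpimE : pim (2^(j+1)) A = 2^(j+1) - p :=
      pim_eq (2^(j+1)) A (2^(j+1) - p) T' (by omega) (by omega) (by omega)
    have hcD2 := cong_iterK (j+1) K (A - 2^j) B hj1K hAj1 (by omega) hB1
    have hcE2 := cong_iterK (j+1) K A B hj1K hA1 (by omega) hB1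
    rw [hpimD] at hcD2
    rw [hpimE] at hcE2
    rw [← hNdef] at hcD2 hcE2
    have q_iff : D = E ↔
        laver (2^(j+1)) (2^j - p) B = laver (2^(j+1)) (2^(j+1) - p) B := by
      constructor
      · intro h
        rw [← hcD2, ← hcE2, ← hDdef, ← hEdef, h]
      · intro h
        rcases hcand with h' | h'
        · exact h'
        · exfalso
          have hpp : pim (2^(j+1)) D = pim (2^(j+1)) E := by
            rw [hDdef, hEdef, hcD2, hcE2, h]
          obtain ⟨qd', hqd', hrd1', hrd2'⟩ := pim_spec (2^(j+1)) D Nat.one_le_two_pow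
          obtain ⟨qe', hqe', hre1', hre2'⟩ := pim_spec (2^(j+1)) E Nat.one_le_two_pow
          rw [hpp] at hqd'
          -- E = D + 2^j gives 2^(j+1)*qe' = 2^(j+1)*qd' + 2^j
          rcases le_or_gt qe' qd' with hle | hlt
          · have hmm : 2^(j+1) * qe' ≤ 2^(j+1) * qd' := Nat.mul_le_mul_left _ hle
            omega
          · have hmm : 2^(j+1) * (qd'+1) ≤ 2^(j+1) * qe' := Nat.mul_le_mul_left _ hlt
            have h10 : (2:ℕ)^(j+1) * (qd' + 1) = 2^(j+1) * qd' + 2^(j+1) := by ring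
            omega
    rw [lhs_iff]
    constructor
    · intro h hcon
      have := q_iff.mpr hcon
      omega
    · intro h
      rcases hcand with h' | h'
      · exact absurd (q_iff.mp h') h
      · exact h'
  -- step between consecutive levels
  have step : ∀ j, m ≤ j →
      ((laver (2^(j+1)) (2^j - p) B = laver (2^(j+1)) (2^(j+1) - p) B) ↔
        (laver (2^(j+2)) (2^(j+1) - p) B = laver (2^(j+2)) (2^(j+2) - p) B)) := by
    intro j hmj
    have hpj : p < 2^j := lt_of_lt_of_le hpm (Nat.pow_le_pow_right (by omega) hmj)
    have hpowj : (2:ℕ)^(j+1) = 2*2^j := by rw [pow_succ]; ring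
    have hpowj2 : (2:ℕ)^(j+2) = 2*2^(j+1) := by rw [pow_succ]; ring
    have h2j : (1:ℕ) ≤ 2^j := Nat.one_le_two_pow
    have ha1 : 2^j < 2^(j+1) - p := by omega
    have ha2 : 2^(j+1) - p < 2^(j+1) := by omega
    have hss := sstep j (2^(j+1) - p) ha1 ha2 B hB1
    have hsub : 2^(j+1) - p - 2^j = 2^j - p := by omega
    rw [hsub] at hss
    have hhigh : laver (2^(j+2)) (2^(j+2) - p) B =
        laver (2^(j+1)) (2^(j+1) - p) B + 2^(j+1) := by
      rw [hpowj2]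
      have := rowHigh (2^(j+1)) (2^(j+2) - p) B Nat.one_le_two_pow (per_pow (j+1))
        (by omega) (by omega) hB1
      rw [hpowj2] at this
      rw [this]
      congr 2
      omega
    rw [← hss, hhigh]
  -- chain from m to n
  have chain : ∀ j, m ≤ j →
      ((laver (2^(m+1)) (2^m - p) B = laver (2^(m+1)) (2^(m+1) - p) B) ↔
        (laver (2^(j+1)) (2^j - p) B = laver (2^(j+1)) (2^(j+1) - p) B)) := by
    intro j hj
    induction j, hj using Nat.le_induction with
    | base => rfl
    | succ j hj ihj =>
      rw [show j + 1 + 1 = j + 2 by omega]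
      exact ihj.trans (step j hj)
  rw [claim m hpm (by omega), claim n (by omega) (by omega), chain n (by omega)]
end

section
/- Let * be the backwards Laver operation on nonnegative integers. For p ≥ 1, p * p = 0 if and only if p is a power of 2. -/
namespace BackLaver

def mkRow (p : ℕ) (ab : ℕ → ℕ → ℕ) : ℕ → ℕ
  | 0 => 0
  | q + 1 => if q = 0 then p + 1 else ab (mkRow p ab q) (p + 1)

def tabD (N : ℕ) : ℕ → ℕ → ℕ → ℕ
  | 0, _, q => q
  | d + 1, r, q => if N - d ≤ r then tabD N d r q else mkRow (N - (d + 1)) (tabD N d) q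

def A (n : ℕ) (p q : ℕ) : ℕ := tabD (2 ^ n) (2 ^ n - 1) p q

noncomputable def per (n p : ℕ) : ℕ := sInf {s | 1 ≤ s ∧ A n p s = 2 ^ n}

lemma tabD_stab (N : ℕ) : ∀ d' d r, d ≤ d' → N - d ≤ r → ∀ q, tabD N d' r q = tabD N d r q := by
  intro d'
  induction d' with
  | zero => intro d r hd _ q; interval_cases d; rfl
  | succ d' ih =>
    intro d r hd hr q
    rcases Nat.eq_or_lt_of_le hd with h | h
    · rw [h]
    · have hd' : d ≤ d' := by omega
      have : N - d' ≤ r := le_trans (by omega) hr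
      rw [tabD, if_pos this, ih d r hd' hr]

lemma tabD_top (N : ℕ) : ∀ d q, tabD N d N q = q := by
  intro d
  induction d with
  | zero => intro q; rfl
  | succ d ih => intro q; rw [tabD, if_pos (by omega)]; exact ih q

lemma A_top (n q : ℕ) : A n (2 ^ n) q = q := tabD_top _ _ _

lemma A_row (n p : ℕ) (hp1 : 1 ≤ p) (hpN : p < 2 ^ n) (q : ℕ) :
    A n p q = mkRow p (tabD (2 ^ n) (2 ^ n - p - 1)) q := by
  set N := 2 ^ n
  have h1 : A n p q = tabD N (N - p) p q := tabD_stab N (N - 1) (N - p) p (by omega) (by omega) q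
  have h2 : N - p = (N - p - 1) + 1 := by omega
  rw [h1, h2, tabD, if_neg (by omega)]
  congr 1
  omega

lemma A_one (n p : ℕ) (hp1 : 1 ≤ p) (hpN : p < 2 ^ n) : A n p 1 = p + 1 := by
  rw [A_row n p hp1 hpN]; rfl

lemma A_succ (n p q : ℕ) (hp1 : 1 ≤ p) (hpN : p < 2 ^ n) (hq : 1 ≤ q)
    (hv : p + 1 ≤ A n p q) : A n p (q + 1) = A n (A n p q) (p + 1) := by
  set N := 2 ^ n
  have hr := A_row n p hp1 hpN
  have hq0 : q ≠ 0 := by omega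
  rw [hr (q + 1), mkRow, if_neg hq0, ← hr q]
  exact (tabD_stab N (N - 1) (N - p - 1) (A n p q) (by omega) (by omega) (p + 1)).symm

lemma bounds (n : ℕ) : ∀ p, 1 ≤ p → p < 2 ^ n → ∀ q, 1 ≤ q → q ≤ 2 ^ n →
    p < A n p q ∧ A n p q ≤ 2 ^ n := by
  set N := 2 ^ n with hN
  suffices h : ∀ d p, N - p = d → 1 ≤ p → p < N → ∀ q, 1 ≤ q → q ≤ N →
      p < A n p q ∧ A n p q ≤ N by
    intro p hp1 hpN q hq1 hqN; exact h (N - p) p rfl hp1 hpN q hq1 hqN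
  intro d
  induction d using Nat.strong_induction_on with
  | _ d IH =>
    rintro p rfl hp1 hpN q hq1 hqN
    induction q with
    | zero => omega
    | succ q ihq =>
      rcases Nat.eq_or_lt_of_le hq1 with h1 | h1
      · rw [← h1, A_one n p hp1 hpN]; omega
      · have hq1' : 1 ≤ q := by omega
        have hqN' : q ≤ N := by omega
        obtain ⟨hb1, hb2⟩ := ihq hq1' hqN'
        have hs := A_succ n p q hp1 hpN hq1' (by omega)
        rcases Nat.eq_or_lt_of_le hb2 with hv | hv
        · rw [hs, hv, A_top]; omega
        · have := IH (N - A n p q) (by omega) (A n p q) rfl (by omega) hv (p + 1)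
            (by omega) (by omega)
          constructor
          · rw [hs]; omega
          · rw [hs]; omega


lemma hit (n p : ℕ) (hp1 : 1 ≤ p) (hpN : p < 2 ^ n) :
    ∃ s, 1 ≤ s ∧ s ≤ 2 ^ n ∧ A n p s = 2 ^ n := by
  set N := 2 ^ n
  have main : ∀ j, 1 ≤ j → j ≤ N →
      (∃ s, 1 ≤ s ∧ s ≤ j ∧ A n p s = N) ∨ p + j ≤ A n p j := by
    intro j
    induction j with
    | zero => omega
    | succ j ihj =>
      intro _ hjN
      rcases Nat.eq_or_lt_of_le (show 1 ≤ j + 1 by omega) with h1 | h1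
      · right; rw [← h1, A_one n p hp1 hpN]
      · have hj1 : 1 ≤ j := by omega
        rcases ihj hj1 (by omega) with ⟨s, hs⟩ | hge
        · left; exact ⟨s, hs.1, by omega, hs.2.2⟩
        · obtain ⟨hb1, hb2⟩ := bounds n p hp1 hpN j hj1 (by omega)
          rcases Nat.eq_or_lt_of_le hb2 with hv | hv
          · left; exact ⟨j, hj1, by omega, hv⟩
          · right
            rw [A_succ n p j hp1 hpN hj1 (by omega)]
            have := (bounds n (A n p j) (by omega) hv (p + 1) (by omega) (by omega)).1
            omega
  rcases main (N - p) (by omega) (by omega) with ⟨s, hs1, hs2, hs3⟩ | hge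
  · exact ⟨s, hs1, by omega, hs3⟩
  · refine ⟨N - p, by omega, by omega, ?_⟩
    have := (bounds n p hp1 hpN (N - p) (by omega) (by omega)).2
    omega

lemma per_spec (n p : ℕ) (hp1 : 1 ≤ p) (hpN : p < 2 ^ n) :
    1 ≤ per n p ∧ per n p ≤ 2 ^ n ∧ A n p (per n p) = 2 ^ n ∧
    ∀ s, 1 ≤ s → s < per n p → A n p s ≠ 2 ^ n := by
  obtain ⟨s, hs1, hs2, hs3⟩ := hit n p hp1 hpN
  have hne : {s | 1 ≤ s ∧ A n p s = 2 ^ n}.Nonempty := ⟨s, hs1, hs3⟩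
  have hmem := Nat.sInf_mem hne
  have hle : per n p ≤ s := Nat.sInf_le ⟨hs1, hs3⟩
  refine ⟨hmem.1, by omega, hmem.2, ?_⟩
  intro t ht1 ht2 ht3
  have : per n p ≤ t :=
    Nat.sInf_le (show t ∈ {s | 1 ≤ s ∧ A n p s = 2 ^ n} from ⟨ht1, ht3⟩)
  omega

lemma per_pos (n p : ℕ) (hp1 : 1 ≤ p) (hpN : p < 2 ^ n) : 1 ≤ per n p :=
  (per_spec n p hp1 hpN).1
lemma per_le (n p : ℕ) (hp1 : 1 ≤ p) (hpN : p < 2 ^ n) : per n p ≤ 2 ^ n :=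
  (per_spec n p hp1 hpN).2.1
lemma per_hit (n p : ℕ) (hp1 : 1 ≤ p) (hpN : p < 2 ^ n) : A n p (per n p) = 2 ^ n :=
  (per_spec n p hp1 hpN).2.2.1
lemma per_min (n p : ℕ) (hp1 : 1 ≤ p) (hpN : p < 2 ^ n) :
    ∀ s, 1 ≤ s → s < per n p → A n p s ≠ 2 ^ n :=
  (per_spec n p hp1 hpN).2.2.2

lemma step_lt (n p s : ℕ) (hp1 : 1 ≤ p) (hpN : p < 2 ^ n) (hs1 : 1 ≤ s)
    (hs2 : s < per n p) : A n p s < A n p (s + 1) := by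
  have hsN : s ≤ 2 ^ n := by have := per_le n p hp1 hpN; omega
  obtain ⟨hb1, hb2⟩ := bounds n p hp1 hpN s hs1 hsN
  have hne := per_min n p hp1 hpN s hs1 hs2
  have hv : A n p s < 2 ^ n := by omega
  rw [A_succ n p s hp1 hpN hs1 (by omega)]
  exact (bounds n (A n p s) (by omega) hv (p + 1) (by omega) (by omega)).1

lemma mono_lt (n p : ℕ) (hp1 : 1 ≤ p) (hpN : p < 2 ^ n) :
    ∀ a b, 1 ≤ a → a < b → b ≤ per n p → A n p a < A n p b := by
  intro a b ha hab hb
  induction b with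
  | zero => omega
  | succ b ihb =>
    rcases Nat.lt_or_ge a b with h | h
    · have h2 := ihb (by omega) (by omega)
      have h3 := step_lt n p b hp1 hpN (by omega) (by omega)
      omega
    · have ha : a = b := by omega
      have h3 := step_lt n p b hp1 hpN (by omega) (by omega)
      rw [ha]; exact h3

lemma periodic1 (n p : ℕ) (hp1 : 1 ≤ p) (hpN : p < 2 ^ n) :
    ∀ s, 1 ≤ s → s + per n p ≤ 2 ^ n → A n p (s + per n p) = A n p s := by
  intro s
  induction s with
  | zero => omega
  | succ s ihs =>
    intro _ hle
    rcases Nat.eq_or_lt_of_le (show 1 ≤ s + 1 by omega) with h1 | h1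
    · have hP := per_pos n p hp1 hpN
      have hhit := per_hit n p hp1 hpN
      have : A n p (per n p + 1) = A n (A n p (per n p)) (p + 1) :=
        A_succ n p (per n p) hp1 hpN hP (by omega)
      rw [← h1]
      rw [show 1 + per n p = per n p + 1 by omega, this, hhit, A_top,
        A_one n p hp1 hpN]
    · have hs1 : 1 ≤ s := by omega
      have hb := bounds n p hp1 hpN (s + per n p) (by omega) (by omega)
      have hb' := bounds n p hp1 hpN s hs1 (by omega)
      rw [show s + 1 + per n p = (s + per n p) + 1 by omega,
        A_succ n p (s + per n p) hp1 hpN (by omega) (by omega),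
        ihs hs1 (by omega),
        ← A_succ n p s hp1 hpN hs1 (by omega)]

lemma periodicM (n p : ℕ) (hp1 : 1 ≤ p) (hpN : p < 2 ^ n) :
    ∀ m s, 1 ≤ s → s + m * per n p ≤ 2 ^ n → A n p (s + m * per n p) = A n p s := by
  intro m
  induction m with
  | zero => intro s _ _; simp
  | succ m ihm =>
    intro s hs1 hle
    have h1 : s + (m + 1) * per n p = (s + per n p) + m * per n p := by ring
    rw [h1, ihm (s + per n p) (by omega) (by omega), periodic1 n p hp1 hpN s hs1 (by omega)]

lemma char (n p : ℕ) (hp1 : 1 ≤ p) (hpN : p < 2 ^ n) :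
    ∀ s, 1 ≤ s → s ≤ 2 ^ n → (A n p s = 2 ^ n ↔ per n p ∣ s) := by
  intro s hs1 hsN
  have hP1 := per_pos n p hp1 hpN
  constructor
  · intro hs
    have hr : s % per n p + (s / per n p) * per n p = s := Nat.mod_add_div' s (per n p)
    by_contra hdvd
    have hr1 : 1 ≤ s % per n p := by
      rcases Nat.eq_zero_or_pos (s % per n p) with h | h
      · exact absurd (Nat.dvd_of_mod_eq_zero h) hdvd
      · omega
    have := periodicM n p hp1 hpN (s / per n p) (s % per n p) hr1 (by omega)
    rw [hr] at this
    exact per_min n p hp1 hpN (s % per n p) hr1 (Nat.mod_lt s hP1) (by omega)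
  · rintro ⟨m, rfl⟩
    have hm1 : 1 ≤ m := by
      rcases Nat.eq_zero_or_pos m with h | h
      · subst h; simp at hs1
      · exact h
    obtain ⟨m', rfl⟩ : ∃ m', m = m' + 1 := ⟨m - 1, by omega⟩
    have h1 : per n p * (m' + 1) = per n p + m' * per n p := by ring
    have h2 := hsN
    rw [h1] at h2 ⊢
    rw [periodicM n p hp1 hpN m' (per n p) hP1 h2]
    exact per_hit n p hp1 hpN


lemma per_eq (n p m : ℕ) (hm1 : 1 ≤ m) (hhit : A n p m = 2 ^ n)
    (hmin : ∀ s, 1 ≤ s → s < m → A n p s ≠ 2 ^ n) : per n p = m := by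
  have hne : {s | 1 ≤ s ∧ A n p s = 2 ^ n}.Nonempty := ⟨m, hm1, hhit⟩
  have hmem := Nat.sInf_mem hne
  have hle : per n p ≤ m :=
    Nat.sInf_le (show m ∈ {s | 1 ≤ s ∧ A n p s = 2 ^ n} from ⟨hm1, hhit⟩)
  rcases Nat.eq_or_lt_of_le hle with h | h
  · exact h
  · exact absurd hmem.2 (hmin _ hmem.1 h)

lemma per_top (n : ℕ) : per n (2 ^ n) = 2 ^ n := by
  refine per_eq n (2 ^ n) (2 ^ n) (Nat.one_le_two_pow) (A_top n _) ?_
  intro s hs1 hs2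
  rw [A_top]; omega

lemma char_all (n p s : ℕ) (hp1 : 1 ≤ p) (hpN : p ≤ 2 ^ n) (hs1 : 1 ≤ s)
    (hsN : s ≤ 2 ^ n) : A n p s = 2 ^ n ↔ per n p ∣ s := by
  rcases Nat.eq_or_lt_of_le hpN with h | h
  · subst h
    rw [A_top, per_top]
    constructor
    · rintro rfl; rfl
    · intro hd; have := Nat.le_of_dvd (by omega) hd; omega
  · exact char n p hp1 h s hs1 hsN

lemma bounds_all (n p s : ℕ) (hp1 : 1 ≤ p) (hpN : p ≤ 2 ^ n) (hs1 : 1 ≤ s)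
    (hsN : s ≤ 2 ^ n) : 1 ≤ A n p s ∧ A n p s ≤ 2 ^ n := by
  rcases Nat.eq_or_lt_of_le hpN with h | h
  · subst h; rw [A_top]; omega
  · have := bounds n p hp1 h s hs1 hsN; omega

lemma A_one_mod (n p : ℕ) (hp1 : 1 ≤ p) (hpN : p ≤ 2 ^ n) :
    A n p 1 = p % 2 ^ n + 1 := by
  rcases Nat.eq_or_lt_of_le hpN with h | h
  · subst h; rw [A_top, Nat.mod_self]
  · rw [A_one n p hp1 h, Nat.mod_eq_of_lt h]

/-- The "reduction" map `[1, 2N] → [1, N]`. -/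
def ph (N x : ℕ) : ℕ := (x - 1) % N + 1

lemma ph_pos (N x : ℕ) : 1 ≤ ph N x := by simp [ph]

lemma ph_le (N x : ℕ) (hN : 1 ≤ N) : ph N x ≤ N := by
  have := Nat.mod_lt (x - 1) (show 0 < N by omega)
  simp only [ph]; omega

lemma ph_small (N x : ℕ) (hx1 : 1 ≤ x) (hxN : x ≤ N) : ph N x = x := by
  simp only [ph]
  rw [Nat.mod_eq_of_lt (by omega)]
  omega

lemma ph_decomp (N x : ℕ) (hx : 1 ≤ x) : ∃ k, x = N * k + ph N x := by
  refine ⟨(x - 1) / N, ?_⟩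
  have := Nat.div_add_mod (x - 1) N
  simp only [ph]
  omega

lemma ph_succ (N x : ℕ) (hN : 1 ≤ N) (hx : 1 ≤ x) :
    ph N (x + 1) = ph N x % N + 1 := by
  obtain ⟨k, hk⟩ := ph_decomp N x hx
  have h1 : 1 ≤ ph N x := ph_pos N x
  have h2 : ph N x ≤ N := ph_le N x hN
  rcases Nat.eq_or_lt_of_le h2 with h | h
  · have e1 : x + 1 - 1 = N * k + N := by omega
    have e2 : ph N (x + 1) = (N * k + N) % N + 1 := by simp only [ph, e1]
    rw [e2, Nat.mul_add_mod, Nat.mod_self, h, Nat.mod_self]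
  · have e1 : x + 1 - 1 = N * k + ph N x := by omega
    have e2 : ph N (x + 1) = (N * k + ph N x) % N + 1 := by simp only [ph, e1]
    rw [e2, Nat.mul_add_mod, Nat.mod_eq_of_lt h]

lemma ph_shift (N x : ℕ) (hx : 1 ≤ x) : ph N (N + x) = ph N x := by
  simp only [ph]
  have : N + x - 1 = N + (x - 1) := by omega
  rw [this, Nat.add_mod_left]

lemma ph_top2 (N : ℕ) (hN : 1 ≤ N) : ph N (2 * N) = N := by
  have : 2 * N = N + N := by ring
  rw [this, ph_shift N N hN, ph_small N N hN le_rfl]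

def PerDvd (n : ℕ) : Prop := ∀ p, 1 ≤ p → p ≤ 2 ^ n → per n p ∣ 2 ^ n

lemma A_last (n p : ℕ) (hp1 : 1 ≤ p) (hpN : p ≤ 2 ^ n) (h : PerDvd n) :
    A n p (2 ^ n) = 2 ^ n := by
  rw [char_all n p (2 ^ n) hp1 hpN (Nat.one_le_two_pow) le_rfl]
  exact h p hp1 hpN

lemma axioms_of (n : ℕ) (h : PerDvd n) : LaverAxioms (2 ^ n) (A n) := by
  have hN : 1 ≤ 2 ^ n := Nat.one_le_two_pow
  refine ⟨?_, ?_, ?_⟩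
  · intro p q hp hq
    simp only [Set.mem_Icc] at *
    have := bounds_all n p q hp.1 hp.2 hq.1 hq.2
    omega
  · intro p hp
    simp only [Set.mem_Icc] at hp
    exact A_one_mod n p hp.1 hp.2
  · intro p q hp hq
    simp only [Set.mem_Icc] at hp hq
    rw [A_one_mod n p hp.1 hp.2, A_one_mod n q hq.1 hq.2]
    rcases Nat.eq_or_lt_of_le hp.2 with hpe | hpl
    · subst hpe
      rw [A_top, A_top, Nat.mod_self, A_one_mod n q hq.1 hq.2]
    · rw [Nat.mod_eq_of_lt hpl]
      rcases Nat.eq_or_lt_of_le hq.2 with hqe | hql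
      · subst hqe
        rw [Nat.mod_self, A_last n p hp.1 hp.2 h, A_top,
          A_one n p hp.1 hpl]
      · rw [Nat.mod_eq_of_lt hql]
        have hb := bounds n p hp.1 hpl q hq.1 hq.2
        exact A_succ n p q hp.1 hpl hq.1 (by omega)


lemma proj (n : ℕ) (hG : PerDvd n) :
    ∀ p, 1 ≤ p → p ≤ 2 ^ (n + 1) → ∀ q, 1 ≤ q → q ≤ 2 ^ (n + 1) →
    ph (2 ^ n) (A (n + 1) p q) = A n (ph (2 ^ n) p) (ph (2 ^ n) q) := by
  have hN : 1 ≤ 2 ^ n := Nat.one_le_two_pow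
  have hNN : 2 ^ (n + 1) = 2 * 2 ^ n := by ring
  have hC := (axioms_of n hG).2.2
  have hmem : ∀ x, ph (2 ^ n) x ∈ Set.Icc 1 (2 ^ n) := by
    intro x; simp only [Set.mem_Icc]; exact ⟨ph_pos _ _, ph_le _ _ hN⟩
  suffices h : ∀ d p, 2 ^ (n + 1) - p = d → 1 ≤ p → p ≤ 2 ^ (n + 1) →
      ∀ q, 1 ≤ q → q ≤ 2 ^ (n + 1) →
      ph (2 ^ n) (A (n + 1) p q) = A n (ph (2 ^ n) p) (ph (2 ^ n) q) by
    intro p hp1 hpN; exact h _ p rfl hp1 hpN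
  intro d
  induction d using Nat.strong_induction_on with
  | _ d IH =>
    rintro p rfl hp1 hpN'
    rcases Nat.eq_or_lt_of_le hpN' with hpe | hpl
    · subst hpe
      intro q hq1 hqN'
      rw [A_top, show (2:ℕ) ^ (n + 1) = 2 * 2 ^ n from hNN, ph_top2 _ hN, A_top]
    · intro q
      induction q with
      | zero => omega
      | succ q ihq =>
        intro _ hqN'
        rcases Nat.eq_or_lt_of_le (show 1 ≤ q + 1 by omega) with h1 | h1
        · rw [← h1, A_one (n + 1) p hp1 hpl, ph_succ _ p hN hp1,
            ph_small (2 ^ n) 1 le_rfl hN]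
          rw [A_one_mod n (ph (2 ^ n) p) (ph_pos _ _) (ph_le _ _ hN)]
        · have hq1 : 1 ≤ q := by omega
          have hqN : q ≤ 2 ^ (n + 1) := by omega
          have hb := bounds (n + 1) p hp1 hpl q hq1 hqN
          set v := A (n + 1) p q with hv
          have hs := A_succ (n + 1) p q hp1 hpl hq1 (by omega)
          have hstep : ph (2 ^ n) (A (n + 1) v (p + 1)) =
              A n (ph (2 ^ n) v) (ph (2 ^ n) (p + 1)) := by
            rcases Nat.eq_or_lt_of_le hb.2 with hve | hvl
            · rw [hve, A_top, show (2:ℕ) ^ (n + 1) = 2 * 2 ^ n from hNN,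
                ph_top2 _ hN, A_top]
            · exact IH (2 ^ (n + 1) - v) (by omega) v rfl (by omega) (by omega)
                (p + 1) (by omega) (by omega)
          rw [hs, hstep, ihq hq1 hqN]
          have hCpq := hC (ph (2 ^ n) p) (ph (2 ^ n) q) (hmem p) (hmem q)
          rw [A_one_mod n (ph (2 ^ n) q) (ph_pos _ _) (ph_le _ _ hN),
            A_one_mod n (ph (2 ^ n) p) (ph_pos _ _) (ph_le _ _ hN)] at hCpq
          rw [ph_succ _ q hN hq1, ph_succ _ p hN hp1, hCpq]


lemma per_pos_all (n p : ℕ) (hp1 : 1 ≤ p) (hpN : p ≤ 2 ^ n) : 1 ≤ per n p := by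
  rcases Nat.eq_or_lt_of_le hpN with h | h
  · subst h; rw [per_top]; exact Nat.one_le_two_pow
  · exact per_pos n p hp1 h

lemma per_le_all (n p : ℕ) (hp1 : 1 ≤ p) (hpN : p ≤ 2 ^ n) : per n p ≤ 2 ^ n := by
  rcases Nat.eq_or_lt_of_le hpN with h | h
  · subst h; rw [per_top]
  · exact per_le n p hp1 h

lemma per_proj (n p : ℕ) (hG : PerDvd n) (hp1 : 1 ≤ p) (hpl : p < 2 ^ (n + 1)) :
    per n (ph (2 ^ n) p) ∣ per (n + 1) p ∧ per (n + 1) p ∣ 2 * per n (ph (2 ^ n) p) := by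
  have hN : 1 ≤ 2 ^ n := Nat.one_le_two_pow
  have hNN : 2 ^ (n + 1) = 2 * 2 ^ n := by ring
  set N := 2 ^ n with hNdef
  set π := per n (ph N p) with hπdef
  set P := per (n + 1) p with hPdef
  have hphp1 : 1 ≤ ph N p := ph_pos _ _
  have hphpN : ph N p ≤ N := ph_le _ _ hN
  have hπ1 : 1 ≤ π := per_pos_all n _ hphp1 hphpN
  have hπN : π ≤ N := per_le_all n _ hphp1 hphpN
  have hπdvdN : π ∣ N := hG _ hphp1 hphpN
  have hP1 : 1 ≤ P := per_pos (n + 1) p hp1 hpl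
  have hPN : P ≤ 2 ^ (n + 1) := per_le (n + 1) p hp1 hpl
  have hPhit : A (n + 1) p P = 2 ^ (n + 1) := per_hit (n + 1) p hp1 hpl
  -- π ∣ P
  have hπP : π ∣ P := by
    have h1 := proj n hG p hp1 (by omega) P hP1 hPN
    rw [hPhit, hNN, ph_top2 _ hN] at h1
    have h2 : π ∣ ph N P := by
      rw [← char_all n (ph N p) (ph N P) hphp1 hphpN (ph_pos _ _) (ph_le _ _ hN)]
      exact h1.symm
    obtain ⟨k, hk⟩ := ph_decomp N P hP1
    rw [hk]
    exact Nat.dvd_add (Dvd.dvd.mul_right hπdvdN k) h2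
  -- P ≤ 2 * π
  have hPle : P ≤ 2 * π := by
    by_contra hcon
    push_neg at hcon
    have hx12 : A (n + 1) p π < A (n + 1) p (2 * π) :=
      mono_lt (n + 1) p hp1 hpl π (2 * π) hπ1 (by omega) (by omega)
    have hx1ne : A (n + 1) p π ≠ 2 ^ (n + 1) :=
      per_min (n + 1) p hp1 hpl π hπ1 (by omega)
    have hx2ne : A (n + 1) p (2 * π) ≠ 2 ^ (n + 1) :=
      per_min (n + 1) p hp1 hpl (2 * π) (by omega) (by omega)
    have hb1 := bounds (n + 1) p hp1 hpl π hπ1 (by omega)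
    have hb2 := bounds (n + 1) p hp1 hpl (2 * π) (by omega) (by omega)
    -- ph of x1
    have h1 := proj n hG p hp1 (by omega) π hπ1 (by omega)
    rw [ph_small N π hπ1 hπN] at h1
    have h1' : A n (ph N p) π = N := by
      rw [char_all n (ph N p) π hphp1 hphpN hπ1 hπN]
    rw [h1'] at h1
    have hx1 : A (n + 1) p π = N := by
      obtain ⟨k, hk⟩ := ph_decomp N (A (n + 1) p π) (by omega)
      rw [h1] at hk
      have hub : A (n + 1) p π ≤ 2 * N := by rw [← hNN]; exact hb1.2
      have hne : A (n + 1) p π ≠ 2 * N := by rw [← hNN]; exact hx1ne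
      rcases k with _ | _ | k
      · omega
      · omega
      · exfalso
        have he : N * (k + 1 + 1) = N * k + 2 * N := by ring
        omega
    -- ph of x2
    have h2 := proj n hG p hp1 (by omega) (2 * π) (by omega) (by omega)
    obtain ⟨k2, hk2⟩ := ph_decomp N (2 * π) (by omega)
    have hπph2 : π ∣ ph N (2 * π) := by
      have e1 : ph N (2 * π) = 2 * π - N * k2 := by omega
      rw [e1]
      exact Nat.dvd_sub (Dvd.dvd.mul_left dvd_rfl 2) (Dvd.dvd.mul_right hπdvdN k2)
    have h2' : A n (ph N p) (ph N (2 * π)) = N := by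
      rw [char_all n (ph N p) (ph N (2 * π)) hphp1 hphpN (ph_pos _ _) (ph_le _ _ hN)]
      exact hπph2
    rw [h2'] at h2
    have hx2 : A (n + 1) p (2 * π) = N := by
      obtain ⟨k, hk⟩ := ph_decomp N (A (n + 1) p (2 * π)) (by omega)
      rw [h2] at hk
      have hub : A (n + 1) p (2 * π) ≤ 2 * N := by rw [← hNN]; exact hb2.2
      have hne : A (n + 1) p (2 * π) ≠ 2 * N := by rw [← hNN]; exact hx2ne
      rcases k with _ | _ | k
      · omega
      · omega
      · exfalso
        have he : N * (k + 1 + 1) = N * k + 2 * N := by ring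
        omega
    omega
  refine ⟨hπP, ?_⟩
  obtain ⟨m, hm⟩ := hπP
  have hm2 : m ≤ 2 := by
    by_contra hm3
    push_neg at hm3
    have : π * 3 ≤ π * m := Nat.mul_le_mul_left π hm3
    have : π * 3 = 3 * π := by ring
    omega
  interval_cases m
  · omega
  · rw [hm]; exact ⟨2, by ring⟩
  · rw [hm]; exact ⟨1, by ring⟩

lemma perDvd_succ (n : ℕ) (hG : PerDvd n) : PerDvd (n + 1) := by
  intro p hp1 hpN
  rcases Nat.eq_or_lt_of_le hpN with h | h
  · subst h; rw [per_top]
  · have h2 := (per_proj n p hG hp1 h).2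
    have h3 : 2 * per n (ph (2 ^ n) p) ∣ 2 ^ (n + 1) := by
      have := hG (ph (2 ^ n) p) (ph_pos _ _) (ph_le _ _ Nat.one_le_two_pow)
      have h4 : (2:ℕ) ^ (n + 1) = 2 * 2 ^ n := by ring
      rw [h4]
      exact Nat.mul_dvd_mul_left 2 this
    exact dvd_trans h2 h3

lemma perDvd_all : ∀ n, PerDvd n := by
  intro n
  induction n with
  | zero =>
    intro p hp1 hpN
    have : p = 1 := by simpa using (by omega : p = 1)
    subst this
    rw [show (1:ℕ) = 2 ^ 0 from rfl, per_top]
  | succ n ih => exact perDvd_succ n ih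


lemma upper (n : ℕ) : ∀ r, 1 ≤ r → r < 2 ^ n → ∀ s, 1 ≤ s → s ≤ 2 ^ (n + 1) →
    A (n + 1) (2 ^ n + r) s = 2 ^ n + A n r (ph (2 ^ n) s) := by
  have hN : 1 ≤ 2 ^ n := Nat.one_le_two_pow
  have hNN : (2:ℕ) ^ (n + 1) = 2 * 2 ^ n := by ring
  have hC := (axioms_of n (perDvd_all n)).2.2
  suffices h : ∀ d r, 2 ^ n - r = d → 1 ≤ r → r < 2 ^ n → ∀ s, 1 ≤ s →
      s ≤ 2 ^ (n + 1) → A (n + 1) (2 ^ n + r) s = 2 ^ n + A n r (ph (2 ^ n) s) by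
    intro r hr1 hrN; exact h _ r rfl hr1 hrN
  intro d
  induction d using Nat.strong_induction_on with
  | _ d IH =>
    rintro r rfl hr1 hrN s
    induction s with
    | zero => omega
    | succ s ihs =>
      intro _ hsN'
      rcases Nat.eq_or_lt_of_le (show 1 ≤ s + 1 by omega) with h1 | h1
      · rw [← h1, A_one (n + 1) (2 ^ n + r) (by omega) (by omega),
          ph_small (2 ^ n) 1 le_rfl hN, A_one n r hr1 hrN]
        omega
      · have hs1 : 1 ≤ s := by omega
        have hphs1 : 1 ≤ ph (2 ^ n) s := ph_pos _ _
        have hphsN : ph (2 ^ n) s ≤ 2 ^ n := ph_le _ _ hN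
        have hw := bounds n r hr1 hrN (ph (2 ^ n) s) hphs1 hphsN
        set w := A n r (ph (2 ^ n) s) with hwdef
        have hihs := ihs hs1 (by omega)
        have hstep := A_succ (n + 1) (2 ^ n + r) s (by omega) (by omega) hs1
          (by rw [hihs]; omega)
        rw [hihs] at hstep
        -- key : A n r (ph (s+1)) = A n w (r + 1)
        have hkey : A n r (ph (2 ^ n) (s + 1)) = A n w (r + 1) := by
          have hCrs := hC r (ph (2 ^ n) s)
            (by simp only [Set.mem_Icc]; omega)
            (by simp only [Set.mem_Icc]; exact ⟨hphs1, hphsN⟩)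
          rw [A_one_mod n (ph (2 ^ n) s) hphs1 hphsN,
            A_one_mod n r hr1 (by omega), Nat.mod_eq_of_lt hrN,
            ← ph_succ _ s hN hs1] at hCrs
          exact hCrs
        have hstep2 : A (n + 1) (2 ^ n + w) (2 ^ n + r + 1) = 2 ^ n + A n w (r + 1) := by
          rcases Nat.eq_or_lt_of_le hw.2 with hwe | hwl
          · have e1 : 2 ^ n + w = 2 ^ (n + 1) := by omega
            rw [e1, A_top, hwe, A_top]
            omega
          · have := IH (2 ^ n - w) (by omega) w rfl (by omega) hwl
              (2 ^ n + r + 1) (by omega) (by omega)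
            rw [this, show 2 ^ n + r + 1 = 2 ^ n + (r + 1) by omega,
              ph_shift _ (r + 1) (by omega), ph_small (2 ^ n) (r + 1) (by omega) (by omega)]
        rw [hstep, hstep2, hkey]

lemma row_half (n : ℕ) : ∀ s, 1 ≤ s → s ≤ 2 ^ (n + 1) →
    A (n + 1) (2 ^ n) s = 2 ^ n + ph (2 ^ n) s := by
  have hN : 1 ≤ 2 ^ n := Nat.one_le_two_pow
  have hNN : (2:ℕ) ^ (n + 1) = 2 * 2 ^ n := by ring
  intro s
  induction s with
  | zero => omega
  | succ s ihs =>
    intro _ hsN'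
    rcases Nat.eq_or_lt_of_le (show 1 ≤ s + 1 by omega) with h1 | h1
    · rw [← h1, A_one (n + 1) (2 ^ n) (by omega) (by omega),
        ph_small (2 ^ n) 1 le_rfl hN]
    · have hs1 : 1 ≤ s := by omega
      have hphs1 : 1 ≤ ph (2 ^ n) s := ph_pos _ _
      have hphsN : ph (2 ^ n) s ≤ 2 ^ n := ph_le _ _ hN
      have hihs := ihs hs1 (by omega)
      have hstep := A_succ (n + 1) (2 ^ n) s (by omega) (by omega) hs1
        (by rw [hihs]; omega)
      rw [hihs] at hstep
      rw [hstep, ph_succ _ s hN hs1]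
      rcases Nat.eq_or_lt_of_le hphsN with he | hl
      · have e1 : 2 ^ n + ph (2 ^ n) s = 2 ^ (n + 1) := by omega
        rw [e1, A_top, he, Nat.mod_self]
      · rw [upper n (ph (2 ^ n) s) hphs1 hl (2 ^ n + 1) (by omega) (by omega),
          show (2:ℕ) ^ n + 1 = 2 ^ n + 1 from rfl,
          ph_shift _ 1 le_rfl, ph_small (2 ^ n) 1 le_rfl hN,
          A_one n (ph (2 ^ n) s) hphs1 hl, Nat.mod_eq_of_lt hl]
      
lemma per_mid (n : ℕ) : per (n + 1) (2 ^ n) = 2 ^ n := by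
  have hN : 1 ≤ 2 ^ n := Nat.one_le_two_pow
  have hNN : (2:ℕ) ^ (n + 1) = 2 * 2 ^ n := by ring
  refine per_eq (n + 1) (2 ^ n) (2 ^ n) hN ?_ ?_
  · rw [row_half n (2 ^ n) hN (by omega), ph_small _ _ hN le_rfl]; omega
  · intro s hs1 hs2
    rw [row_half n s hs1 (by omega), ph_small _ _ hs1 (by omega)]
    omega

lemma per_upper (n r : ℕ) (hr1 : 1 ≤ r) (hrN : r < 2 ^ n) :
    per (n + 1) (2 ^ n + r) = per n r := by
  have hN : 1 ≤ 2 ^ n := Nat.one_le_two_pow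
  have hNN : (2:ℕ) ^ (n + 1) = 2 * 2 ^ n := by ring
  have hπ1 := per_pos n r hr1 hrN
  have hπN := per_le n r hr1 hrN
  refine per_eq (n + 1) (2 ^ n + r) (per n r) hπ1 ?_ ?_
  · rw [upper n r hr1 hrN (per n r) hπ1 (by omega),
      ph_small _ _ hπ1 hπN, per_hit n r hr1 hrN]
    omega
  · intro s hs1 hs2
    rw [upper n r hr1 hrN s hs1 (by omega), ph_small _ _ hs1 (by omega)]
    have h1 := per_min n r hr1 hrN s hs1 hs2
    have h2 := (bounds n r hr1 hrN s hs1 (by omega)).2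
    omega


lemma x3 : ∀ n t k, 1 ≤ t → t < 2 ^ n → t < 2 ^ (k + 1) → per n (2 ^ n - t) ∣ 2 ^ k := by
  intro n
  induction n with
  | zero => intro t k ht1 ht2 _; omega
  | succ n IH =>
    intro t k ht1 htN htk
    have hN : 1 ≤ 2 ^ n := Nat.one_le_two_pow
    have hNN : (2:ℕ) ^ (n + 1) = 2 * 2 ^ n := by ring
    rcases lt_trichotomy t (2 ^ n) with hlt | heq | hgt
    · have e1 : 2 ^ (n + 1) - t = 2 ^ n + (2 ^ n - t) := by omega
      rw [e1, per_upper n (2 ^ n - t) (by omega) (by omega)]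
      exact IH t k ht1 hlt htk
    · have e1 : 2 ^ (n + 1) - t = 2 ^ n := by omega
      rw [e1, per_mid n]
      have hnk : n ≤ k := by
        by_contra hc
        push_neg at hc
        have : (2:ℕ) ^ (k + 1) ≤ 2 ^ n := Nat.pow_le_pow_right (by omega) (by omega)
        omega
      exact pow_dvd_pow 2 hnk
    · rcases Nat.lt_or_ge k (n + 1) with hkn | hkn
      · have hkeq : k = n := by
          by_contra hc
          have h2 : k + 1 ≤ n := by omega
          have : (2:ℕ) ^ (k + 1) ≤ 2 ^ n := Nat.pow_le_pow_right (by omega) h2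
          omega
        subst hkeq
        have hn1 : 1 ≤ k := by
          by_contra hc
          push_neg at hc
          interval_cases k <;> omega
        set R := 2 ^ (k + 1) - t with hR
        have hR1 : 1 ≤ R := by omega
        have hRN : R < 2 ^ k := by omega
        have hdbl := (per_proj k R (perDvd_all k) hR1 (by omega)).2
        rw [ph_small _ _ hR1 (by omega)] at hdbl
        have e2 : R = 2 ^ k - (t - 2 ^ k) := by omega
        have hsub : per k R ∣ 2 ^ (k - 1) := by
          rw [e2]
          refine IH (t - 2 ^ k) (k - 1) (by omega) (by omega) ?_
          have e3 : k - 1 + 1 = k := by omega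
          rw [e3]
          omega
        have e3 : (2:ℕ) ^ k = 2 * 2 ^ (k - 1) := by
          conv_lhs => rw [show k = (k - 1) + 1 by omega]
          rw [pow_succ]; ring
        rw [e3]
        exact dvd_trans hdbl (Nat.mul_dvd_mul_left 2 hsub)
      · have h1 : per (n + 1) (2 ^ (n + 1) - t) ∣ 2 ^ (n + 1) :=
          perDvd_all (n + 1) _ (by omega) (by omega)
        exact dvd_trans h1 (pow_dvd_pow 2 hkn)

lemma exact_row (n k : ℕ) (hk : k < n) : ∀ s, 1 ≤ s → s ≤ 2 ^ k →
    A (n + 1) (2 ^ n - 2 ^ k) s = 2 ^ n - 2 ^ k + s := by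
  have hN : 1 ≤ 2 ^ n := Nat.one_le_two_pow
  have hNN : (2:ℕ) ^ (n + 1) = 2 * 2 ^ n := by ring
  have hkN : (2:ℕ) ^ k < 2 ^ n := Nat.pow_lt_pow_right (by omega) hk
  have hk1 : (1:ℕ) ≤ 2 ^ k := Nat.one_le_two_pow
  set q := 2 ^ n - 2 ^ k with hq
  have hq1 : 1 ≤ q := by omega
  have hqN : q < 2 ^ (n + 1) := by omega
  intro s
  induction s with
  | zero => omega
  | succ s ihs =>
    intro _ hsk
    rcases Nat.eq_or_lt_of_le (show 1 ≤ s + 1 by omega) with h1 | h1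
    · rw [← h1, A_one (n + 1) q hq1 hqN]
    · have hs1 : 1 ≤ s := by omega
      have hkk1 : 1 ≤ k := by
        by_contra hc
        push_neg at hc
        interval_cases k <;> omega
      have hihs := ihs hs1 (by omega)
      have hstep := A_succ (n + 1) q s hq1 hqN hs1 (by rw [hihs]; omega)
      rw [hihs] at hstep
      set r := q + s with hr
      have hr1 : 1 ≤ r := by omega
      have hrN : r < 2 ^ n := by omega
      have hper : per (n + 1) r ∣ 2 ^ k := by
        have hdbl := (per_proj n r (perDvd_all n) hr1 (by omega)).2
        rw [ph_small _ _ hr1 (by omega)] at hdbl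
        have hsub : per n r ∣ 2 ^ (k - 1) := by
          have e2 : r = 2 ^ n - (2 ^ k - s) := by omega
          rw [e2]
          refine x3 n (2 ^ k - s) (k - 1) (by omega) (by omega) ?_
          have e3 : k - 1 + 1 = k := by omega
          rw [e3]
          omega
        have e3 : (2:ℕ) ^ k = 2 * 2 ^ (k - 1) := by
          conv_lhs => rw [show k = (k - 1) + 1 by omega]
          rw [pow_succ]; ring
        rw [e3]
        exact dvd_trans hdbl (Nat.mul_dvd_mul_left 2 hsub)
      have hdq : per (n + 1) r ∣ q := by
        refine dvd_trans hper ?_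
        exact Nat.dvd_sub (pow_dvd_pow 2 (le_of_lt hk)) dvd_rfl
      obtain ⟨m, hm⟩ := hdq
      have hper1 : 1 ≤ per (n + 1) r := per_pos (n + 1) r hr1 (by omega)
      have hq' : q = m * per (n + 1) r := by rw [hm]; ring
      have hperiod := periodicM (n + 1) r hr1 (by omega) m 1 le_rfl
        (by rw [← hq']; omega)
      rw [← hq'] at hperiod
      rw [hstep, show q + 1 = 1 + q by omega, hperiod, A_one (n + 1) r hr1 (by omega)]
      omega

lemma not_dvd_key (n k : ℕ) (hk : k < n) :
    ¬ per (n + 1) (2 ^ n - 2 ^ k) ∣ (2 ^ n - 2 ^ k) := by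
  have hN : 1 ≤ 2 ^ n := Nat.one_le_two_pow
  have hNN : (2:ℕ) ^ (n + 1) = 2 * 2 ^ n := by ring
  have hkN : (2:ℕ) ^ k < 2 ^ n := Nat.pow_lt_pow_right (by omega) hk
  have hk1 : (1:ℕ) ≤ 2 ^ k := Nat.one_le_two_pow
  set q := 2 ^ n - 2 ^ k with hq
  have hq1 : 1 ≤ q := by omega
  have hqN : q < 2 ^ (n + 1) := by omega
  set P := per (n + 1) q with hP
  intro hPq
  have hπ : per n q ∣ 2 ^ k := by
    refine x3 n (2 ^ k) k hk1 hkN ?_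
    have : (2:ℕ) ^ (k + 1) = 2 * 2 ^ k := by ring
    omega
  have hPdvd : P ∣ 2 ^ (k + 1) := by
    have hdbl := (per_proj n q (perDvd_all n) hq1 hqN).2
    rw [ph_small _ _ hq1 (by omega)] at hdbl
    have h2 : 2 * per n q ∣ 2 * 2 ^ k := Nat.mul_dvd_mul_left 2 hπ
    have e2 : 2 * 2 ^ k = 2 ^ (k + 1) := by ring
    rw [e2] at h2
    exact dvd_trans hdbl h2
  have hPnk : ¬ P ∣ 2 ^ k := by
    intro hc
    have hhit : A (n + 1) q (2 ^ k) = 2 ^ (n + 1) := by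
      rw [char (n + 1) q hq1 hqN (2 ^ k) hk1 (by omega)]
      exact hc
    have h2 := exact_row n k hk (2 ^ k) hk1 le_rfl
    rw [← hq] at h2
    omega
  have hPeq : P = 2 ^ (k + 1) := by
    obtain ⟨j, hj, hje⟩ := (Nat.dvd_prime_pow Nat.prime_two).mp hPdvd
    rcases Nat.eq_or_lt_of_le hj with h | h
    · rw [hje, h]
    · exact absurd (hje ▸ pow_dvd_pow 2 (show j ≤ k by omega)) hPnk
  rw [hPeq] at hPq
  obtain ⟨c, hc⟩ := hPq
  have e4 : (2:ℕ) ^ n = 2 ^ k * 2 ^ (n - k) := by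
    rw [← pow_add]; congr 1; omega
  have e5 : (2:ℕ) ^ (n - k) = 2 * 2 ^ (n - k - 1) := by
    conv_lhs => rw [show n - k = (n - k - 1) + 1 by omega]
    rw [pow_succ]; ring
  have e6 : (2:ℕ) ^ (k + 1) = 2 * 2 ^ k := by ring
  rw [e6] at hc
  set Y := 2 ^ (n - k - 1) with hY
  have hY1 : 1 ≤ Y := Nat.one_le_two_pow
  have hn2 : (2:ℕ) ^ n = 2 ^ k * (2 * Y) := by rw [e4, e5]
  have hdist : (2 * Y - 1) * 2 ^ k = (2 * Y) * 2 ^ k - 2 ^ k := Nat.sub_one_mul _ _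
  have h11 : (2 * Y - 1) * 2 ^ k = (2 * c) * 2 ^ k := by
    rw [hdist]
    have h13 : (2 * Y) * 2 ^ k = 2 ^ n := by rw [hn2]; ring
    rw [h13, ← hq, hc]
    ring
  have h12 : 2 * Y - 1 = 2 * c := Nat.eq_of_mul_eq_mul_right (by omega) h11
  omega

lemma diag : ∀ n q, 1 ≤ q → q < 2 ^ n → (per n q ∣ q ↔ ∃ k, q + 2 ^ k = 2 ^ n) := by
  intro n
  induction n with
  | zero => intro q h1 h2; omega
  | succ n IH =>
    intro q hq1 hqN'
    have hN : 1 ≤ 2 ^ n := Nat.one_le_two_pow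
    have hNN : (2:ℕ) ^ (n + 1) = 2 * 2 ^ n := by ring
    rcases lt_trichotomy q (2 ^ n) with hlt | heq | hgt
    · constructor
      · intro hPq
        exfalso
        have hπP := (per_proj n q (perDvd_all n) hq1 hqN').1
        rw [ph_small _ _ hq1 (by omega)] at hπP
        have hπq : per n q ∣ q := dvd_trans hπP hPq
        obtain ⟨k, hk⟩ := (IH q hq1 hlt).mp hπq
        have hkn : k < n := by
          by_contra hc
          push_neg at hc
          have : (2:ℕ) ^ n ≤ 2 ^ k := Nat.pow_le_pow_right (by omega) hc
          omega
        have e1 : q = 2 ^ n - 2 ^ k := by omega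
        rw [e1] at hPq
        exact not_dvd_key n k hkn hPq
      · rintro ⟨k, hk⟩
        exfalso
        have h1 : (2:ℕ) ^ n < 2 ^ k := by omega
        have h2 : n < k := by
          by_contra hc
          push_neg at hc
          have : (2:ℕ) ^ k ≤ 2 ^ n := Nat.pow_le_pow_right (by omega) hc
          omega
        have : (2:ℕ) ^ (n + 1) ≤ 2 ^ k := Nat.pow_le_pow_right (by omega) (by omega)
        omega
    · subst heq
      rw [per_mid n]
      constructor
      · intro _; exact ⟨n, by omega⟩
      · intro _; exact dvd_rfl
    · set r := q - 2 ^ n with hr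
      have hr1 : 1 ≤ r := by omega
      have hrN : r < 2 ^ n := by omega
      have e1 : q = 2 ^ n + r := by omega
      have hperq : per (n + 1) q = per n r := by rw [e1]; exact per_upper n r hr1 hrN
      have hπN : per n r ∣ 2 ^ n := perDvd_all n r hr1 (by omega)
      rw [hperq]
      have hiff : per n r ∣ q ↔ per n r ∣ r := by
        rw [e1]
        exact Nat.dvd_add_right hπN
      rw [hiff, IH r hr1 hrN]
      constructor
      · rintro ⟨k, hk⟩
        exact ⟨k, by omega⟩
      · rintro ⟨k, hk⟩
        refine ⟨k, ?_⟩
        have hkn : (2:ℕ) ^ k < 2 ^ n := by omega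
        omega

end BackLaver

/-- for p ≥ 1, p * p = 0 if and only if p is a power of 2. -/
theorem backLaver_square_zero_iff (bstar : ℕ → ℕ → ℕ) (hb : IsBackLaver bstar) :
    ∀ p : ℕ, 1 ≤ p → (bstar p p = 0 ↔ ∃ k, p = 2 ^ k) := by
  intro p hp
  have hpn : p < 2 ^ p := Nat.lt_two_pow_self
  have hax : LaverAxioms (2 ^ p) (BackLaver.A p) :=
    BackLaver.axioms_of p (BackLaver.perDvd_all p)
  have hbp := hb p (BackLaver.A p) hax p p hpn hpn
  have hq1 : 1 ≤ 2 ^ p - p := by omega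
  have hqN : 2 ^ p - p < 2 ^ p := by omega
  have hbnd := BackLaver.bounds p (2 ^ p - p) hq1 hqN (2 ^ p - p) hq1 (by omega)
  have hiff : BackLaver.A p (2 ^ p - p) (2 ^ p - p) = 2 ^ p ↔ ∃ k, p = 2 ^ k := by
    rw [BackLaver.char p (2 ^ p - p) hq1 hqN (2 ^ p - p) hq1 (by omega),
      BackLaver.diag p (2 ^ p - p) hq1 hqN]
    constructor
    · rintro ⟨k, hk⟩
      have hkp : (2:ℕ) ^ k < 2 ^ p := by omega
      exact ⟨k, by omega⟩
    · rintro ⟨k, hk⟩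
      exact ⟨k, by omega⟩
  rw [hbp]
  constructor
  · intro h0
    exact hiff.mp (by omega)
  · intro h
    rw [hiff.mpr h, Nat.sub_self]
end
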